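/- Suppose an 8-vertex v of G lies on three distinct poor triangles, i.e., three triangles each of whose two vertices other than v are 3-vertices whose pendant neighbors have degree at most 5. Then (i) v does not lie on a further triangle containing a 3-vertex whose pendant neighbor has degree at most 5 (in particular v lies on no semi-poor triangle), and (ii) v is not adjacent to two distinct bad 3-vertices lying on triangles not containing v (v has no two pendant triangles). -/
import Mathlib


/-- A graph is `(c 0, c 1, c 2)`-colorable if its vertices can be colored with
colors `0, 1, 2` so that every vertex colored `i` has at most `c i` neighbors of its
own color.  With `c = ![1,1,0]` this is a `(1,1,0)`-coloring. -/
def Colorable3 {α : Type*} (G : SimpleGraph α) (c : Fin 3 → ℕ) : Prop :=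
  ∃ f : α → Fin 3, ∀ v, {u | G.Adj v u ∧ f u = f v}.ncard ≤ c (f v)

/-- `G` contains no cycle of length 4 and no cycle of length 5. -/
def NoC45 {V : Type*} (G : SimpleGraph V) : Prop :=
  ∀ (v : V) (w : G.Walk v v), w.IsCycle → w.length ≠ 4 ∧ w.length ≠ 5

/-- `G` is a minimal counterexample: `G` is not `(c 0, c 1, c 2)`-colorable, but every
proper subgraph of `G` is. -/
def MinCE {V : Type*} (G : SimpleGraph V) (c : Fin 3 → ℕ) : Prop :=
  ¬ Colorable3 G c ∧ ∀ H : G.Subgraph, H ≠ ⊤ → Colorable3 H.coe c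

/-- `u`, `v`, `w` form a triangle of `G`. -/
def TriOn {V : Type*} (G : SimpleGraph V) (u v w : V) : Prop :=
  G.Adj u v ∧ G.Adj v w ∧ G.Adj u w

/-- `T` is a poor triangle at `v`: a triangle containing `v` whose two other vertices
are 3-vertices whose pendant neighbors (unique neighbors outside the triangle) have
degree at most 5. -/
def PoorAt {V : Type*} [Fintype V] (G : SimpleGraph V) [DecidableRel G.Adj]
    (v : V) (T : Set V) : Prop :=
  ∃ a b : V, TriOn G v a b ∧ T = {v, a, b} ∧
    G.degree a = 3 ∧ G.degree b = 3 ∧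
    (∀ x : V, G.Adj a x → x ≠ v → x ≠ b → G.degree x ≤ 5) ∧
    (∀ x : V, G.Adj b x → x ≠ v → x ≠ a → G.degree x ≤ 5)

/-- `a` is a bad 3-vertex adjacent to `v` lying on a triangle not containing `v`
(so that triangle is a pendant triangle of `v`). -/
def PendantBad {V : Type*} [Fintype V] (G : SimpleGraph V) [DecidableRel G.Adj]
    (v a : V) : Prop :=
  G.Adj v a ∧ G.degree a = 3 ∧ ∃ x y : V, TriOn G a x y ∧ x ≠ v ∧ y ≠ v

/-! ### Auxiliary machinery -/

lemma fin3cases (x : Fin 3) : x = 0 ∨ x = 1 ∨ x = 2 := by omega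

lemma c4elim {V : Type*} {G : SimpleGraph V} (hG : NoC45 G) {a b c d : V}
    (h1 : G.Adj a b) (h2 : G.Adj b c) (h3 : G.Adj c d) (h4 : G.Adj d a)
    (hac : a ≠ c) (hbd : b ≠ d) : False := by
  have hab := h1.ne; have hbc := h2.ne; have hcd := h3.ne; have hda := h4.ne
  refine (hG a (.cons h1 (.cons h2 (.cons h3 (.cons h4 .nil)))) ?_).1 (by simp)
  simp only [SimpleGraph.Walk.isCycle_def, SimpleGraph.Walk.isTrail_def,
    SimpleGraph.Walk.edges_cons, SimpleGraph.Walk.edges_nil,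
    SimpleGraph.Walk.support_cons, SimpleGraph.Walk.support_nil,
    List.tail, List.nodup_cons, List.mem_cons, Sym2.eq_iff, List.not_mem_nil,
    List.nodup_nil, ne_eq, not_false_eq_true]
  refine ⟨⟨?_, ?_⟩, ?_⟩ <;> tauto

/-- validity of a coloring outside `D` -/
def OkOn {V : Type*} (G : SimpleGraph V) (D : Set V) (c : Fin 3 → ℕ) (f : V → Fin 3) : Prop :=
  ∀ w ∉ D, {u | G.Adj w u ∧ u ∉ D ∧ f u = f w}.ncard ≤ c (f w)

lemma exists_del_coloring {V : Type*} {G : SimpleGraph V} {c : Fin 3 → ℕ}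
    (hmin : MinCE G c) (D : Set V) (hD : D.Nonempty) :
    ∃ f : V → Fin 3, OkOn G D c f := by
  classical
  obtain ⟨d, hd⟩ := hD
  set H : G.Subgraph := (⊤ : G.Subgraph).deleteVerts D with hH
  have hne : H ≠ ⊤ := by
    intro h
    have : d ∈ H.verts := by rw [h]; trivial
    rw [hH, SimpleGraph.Subgraph.deleteVerts_verts] at this
    exact this.2 hd
  obtain ⟨f₀, hf₀⟩ := hmin.2 H hne
  have hv : ∀ u : V, u ∉ D → u ∈ H.verts := by
    intro u hu; simp [hH, SimpleGraph.Subgraph.deleteVerts_verts]; exact hu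
  refine ⟨fun u => if h : u ∈ H.verts then f₀ ⟨u, h⟩ else 0, ?_⟩
  intro w hw
  have hwH := hv w hw
  have key : {u : V | G.Adj w u ∧ u ∉ D ∧
      (if h : u ∈ H.verts then f₀ ⟨u, h⟩ else 0) =
      (if h : w ∈ H.verts then f₀ ⟨w, h⟩ else 0)}
      = Subtype.val '' {u : H.verts | H.coe.Adj ⟨w, hwH⟩ u ∧ f₀ u = f₀ ⟨w, hwH⟩} := by
    ext u
    simp only [Set.mem_setOf_eq, Set.mem_image, Subtype.exists, exists_and_right,
      exists_eq_right]
    constructor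
    · rintro ⟨hadj, hu, hcol⟩
      have huH := hv u hu
      refine ⟨huH, ?_, ?_⟩
      · simp only [SimpleGraph.Subgraph.coe_adj]
        simp [hH, SimpleGraph.Subgraph.deleteVerts_adj, hw, hu, hadj]
      · rw [dif_pos huH, dif_pos hwH] at hcol; exact hcol
    · rintro ⟨huH, hadj, hcol⟩
      simp only [SimpleGraph.Subgraph.coe_adj, hH,
        SimpleGraph.Subgraph.deleteVerts_adj] at hadj
      refine ⟨(SimpleGraph.Subgraph.top_adj).mp hadj.2.2.2.2, hadj.2.2.2.1, ?_⟩
      rw [dif_pos huH, dif_pos hwH]; exact hcol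
  rw [key, Set.ncard_image_of_injective _ Subtype.val_injective]
  simp only [dif_pos hwH]
  exact hf₀ ⟨w, hwH⟩

lemma fix_pendants {V : Type*} [Fintype V] {G : SimpleGraph V} {D : Set V} {P : Finset V}
    (hP : ∀ p ∈ P, ({u | G.Adj p u ∧ u ∉ D}).ncard ≤ 4)
    {f : V → Fin 3} (hf : OkOn G D ![3,0,0] f) :
    ∃ f' : V → Fin 3, OkOn G D ![3,0,0] f' ∧
      ∀ p ∈ P, f' p = 0 → ({u | G.Adj p u ∧ u ∉ D ∧ f' u = 0}).ncard ≤ 2 := by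
  classical
  suffices H : ∀ (n : ℕ) (f : V → Fin 3), OkOn G D ![3,0,0] f →
      ((P.filter (fun p => f p = 0 ∧ 3 ≤ ({u | G.Adj p u ∧ u ∉ D ∧ f u = 0}).ncard)).card ≤ n) →
      ∃ f' : V → Fin 3, OkOn G D ![3,0,0] f' ∧
      ∀ p ∈ P, f' p = 0 → ({u | G.Adj p u ∧ u ∉ D ∧ f' u = 0}).ncard ≤ 2 by
    exact H _ f hf (Finset.card_filter_le _ _)
  intro n
  induction n with
  | zero =>
    intro f hf hcard
    refine ⟨f, hf, fun p hp hp0 => ?_⟩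
    by_contra hgt
    have hmem : p ∈ P.filter (fun p => f p = 0 ∧ 3 ≤ ({u | G.Adj p u ∧ u ∉ D ∧ f u = 0}).ncard) :=
      Finset.mem_filter.2 ⟨hp, hp0, by omega⟩
    have := Finset.card_pos.2 ⟨p, hmem⟩
    omega
  | succ n ih =>
    intro f hf hcard
    by_cases hbad : ∃ p ∈ P, f p = 0 ∧ 3 ≤ ({u | G.Adj p u ∧ u ∉ D ∧ f u = 0}).ncard
    · obtain ⟨p, hpP, hp0, hp3⟩ := hbad
      have hcc : ∃ cc : Fin 3, cc ≠ 0 ∧ ∀ u, G.Adj p u → u ∉ D → f u ≠ cc := by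
        by_cases h1 : ∃ u, G.Adj p u ∧ u ∉ D ∧ f u = 1
        · by_cases h2 : ∃ u, G.Adj p u ∧ u ∉ D ∧ f u = 2
          · exfalso
            obtain ⟨u1, hu1a, hu1d, hu1⟩ := h1
            obtain ⟨u2, hu2a, hu2d, hu2⟩ := h2
            have h12 : u1 ≠ u2 := by intro h; rw [h, hu2] at hu1; exact absurd hu1 (by decide)
            have hsub : {u | G.Adj p u ∧ u ∉ D ∧ f u = 0} ∪ {u1, u2} ⊆ {u | G.Adj p u ∧ u ∉ D} := by
              rintro u (hu | hu)
              · exact ⟨hu.1, hu.2.1⟩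
              · rcases hu with rfl | rfl
                · exact ⟨hu1a, hu1d⟩
                · exact ⟨hu2a, hu2d⟩
            have hdisj : Disjoint {u | G.Adj p u ∧ u ∉ D ∧ f u = 0} ({u1, u2} : Set V) := by
              rw [Set.disjoint_right]
              rintro u (rfl | rfl) hu
              · rw [hu.2.2] at hu1; exact absurd hu1 (by decide)
              · rw [hu.2.2] at hu2; exact absurd hu2 (by decide)
            have hcard2 : ({u1, u2} : Set V).ncard = 2 := Set.ncard_pair h12
            have := Set.ncard_union_eq hdisj (Set.toFinite _) (Set.toFinite _)
            have hle := Set.ncard_le_ncard hsub (Set.toFinite _)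
            have := hP p hpP
            omega
          · push_neg at h2
            exact ⟨2, by decide, fun u ha hd => h2 u ha hd⟩
        · push_neg at h1
          exact ⟨1, by decide, fun u ha hd => h1 u ha hd⟩
      obtain ⟨cc, hcc0, hccn⟩ := hcc
      set f' : V → Fin 3 := Function.update f p cc with hf'def
      have hf'p : f' p = cc := Function.update_self _ _ _
      have hf'ne : ∀ u, u ≠ p → f' u = f u := fun u h => Function.update_of_ne h _ _
      have hcapcc : (![3,0,0] : Fin 3 → ℕ) cc = 0 := by
        rcases fin3cases cc with rfl | rfl | rfl
        · exact absurd rfl hcc0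
        · rfl
        · rfl
      have hok' : OkOn G D ![3,0,0] f' := by
        intro w hw
        by_cases hwp : w = p
        · subst hwp
          have : {u | G.Adj w u ∧ u ∉ D ∧ f' u = f' w} = ∅ := by
            rw [Set.eq_empty_iff_forall_notMem]
            rintro u ⟨hadj, hud, hcol⟩
            rw [hf'ne u hadj.ne', hf'p] at hcol
            exact hccn u hadj hud hcol
          rw [this, hf'p]
          simp [hcapcc]
        · have hfw : f' w = f w := hf'ne w hwp
          rw [hfw]
          have hsub : {u | G.Adj w u ∧ u ∉ D ∧ f' u = f w} ⊆ {u | G.Adj w u ∧ u ∉ D ∧ f u = f w} := by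
            rintro u ⟨hadj, hud, hcol⟩
            refine ⟨hadj, hud, ?_⟩
            rcases eq_or_ne u p with rfl | hup
            · rw [hf'p] at hcol
              exact absurd hcol.symm (hccn w hadj.symm hw)
            · rwa [hf'ne u hup] at hcol
          exact le_trans (Set.ncard_le_ncard hsub (Set.toFinite _)) (hf w hw)
      apply ih f' hok'
      have hsubf : (P.filter (fun q => f' q = 0 ∧ 3 ≤ ({u | G.Adj q u ∧ u ∉ D ∧ f' u = 0}).ncard))
          ⊆ (P.filter (fun q => f q = 0 ∧ 3 ≤ ({u | G.Adj q u ∧ u ∉ D ∧ f u = 0}).ncard)).erase p := by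
        intro q hq
        rw [Finset.mem_filter] at hq
        obtain ⟨hqP, hq0, hq3⟩ := hq
        have hqp : q ≠ p := by
          intro h; rw [h, hf'p] at hq0; exact hcc0 hq0
        rw [Finset.mem_erase, Finset.mem_filter]
        refine ⟨hqp, hqP, by rwa [hf'ne q hqp] at hq0, ?_⟩
        have : {u | G.Adj q u ∧ u ∉ D ∧ f' u = 0} ⊆ {u | G.Adj q u ∧ u ∉ D ∧ f u = 0} := by
          rintro u ⟨hadj, hud, hcol⟩
          rcases eq_or_ne u p with rfl | hup
          · rw [hf'p] at hcol; exact absurd hcol hcc0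
          · exact ⟨hadj, hud, by rwa [hf'ne u hup] at hcol⟩
        exact le_trans hq3 (Set.ncard_le_ncard this (Set.toFinite _))
      have hpmem : p ∈ P.filter (fun q => f q = 0 ∧ 3 ≤ ({u | G.Adj q u ∧ u ∉ D ∧ f u = 0}).ncard) :=
        Finset.mem_filter.2 ⟨hpP, hp0, hp3⟩
      have := Finset.card_le_card hsubf
      rw [Finset.card_erase_of_mem hpmem] at this
      have := Finset.card_pos.2 ⟨p, hpmem⟩
      omega
    · push_neg at hbad
      refine ⟨f, hf, fun p hp hp0 => ?_⟩
      have := hbad p hp hp0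
      omega

set_option linter.unusedSectionVars false
set_option linter.unusedVariables false

section AuxHelpers

variable {V : Type*} [Fintype V] {G : SimpleGraph V} [DecidableRel G.Adj]

/-- two distinct neighbours of `v` have no other common neighbour -/
lemma common_nbr (hG : NoC45 G) {v x x' pe : V} (hvx : G.Adj v x) (hvx' : G.Adj v x')
    (hxx' : x ≠ x') (hpx : G.Adj pe x) (hpx' : G.Adj pe x') : pe = v := by
  by_contra h
  exact c4elim hG hvx hpx.symm hpx' hvx'.symm (fun hh => h hh.symm) hxx'

/-- the extra neighbour of a triangle's 3-vertex is not adjacent to `v` -/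
lemma tri_pend_not_adj (hG : NoC45 G) {v a b p : V} (hva : G.Adj v a) (hvb : G.Adj v b)
    (hab : G.Adj a b) (hap : G.Adj a p) (hpb : p ≠ b) : ¬ G.Adj v p := by
  intro h
  exact c4elim hG hvb hab.symm hap h.symm hva.ne hpb.symm

lemma deg3_nbrs {a u w : V} (ha : G.degree a = 3) (h1 : G.Adj a u) (h2 : G.Adj a w)
    (huw : u ≠ w) :
    ∃ p, p ≠ u ∧ p ≠ w ∧ G.Adj a p ∧ ∀ z, G.Adj a z ↔ z = u ∨ z = w ∨ z = p := by
  classical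
  have hcard : (G.neighborFinset a).card = 3 := by
    rw [SimpleGraph.card_neighborFinset_eq_degree]; exact ha
  have hsub : ({u, w} : Finset V) ⊆ G.neighborFinset a := by
    intro z hz
    simp only [Finset.mem_insert, Finset.mem_singleton] at hz
    rcases hz with rfl | rfl <;> simp [SimpleGraph.mem_neighborFinset, h1, h2]
  have hcard2 : ({u, w} : Finset V).card = 2 := by
    rw [Finset.card_insert_of_notMem (by simp [huw]), Finset.card_singleton]
  have hd : (G.neighborFinset a \ {u, w}).card = 1 := by
    rw [Finset.card_sdiff_of_subset hsub, hcard, hcard2]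
  obtain ⟨p, hp⟩ := Finset.card_eq_one.1 hd
  have hpmem : p ∈ G.neighborFinset a \ ({u, w} : Finset V) := by rw [hp]; simp
  rw [Finset.mem_sdiff, Finset.mem_insert, Finset.mem_singleton] at hpmem
  push_neg at hpmem
  refine ⟨p, hpmem.2.1, hpmem.2.2, (SimpleGraph.mem_neighborFinset _ _ _).1 hpmem.1, ?_⟩
  intro z
  rw [← SimpleGraph.mem_neighborFinset]
  constructor
  · intro hz
    by_cases hzu : z = u
    · exact Or.inl hzu
    by_cases hzw : z = w
    · exact Or.inr (Or.inl hzw)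
    have : z ∈ G.neighborFinset a \ ({u, w} : Finset V) := by
      rw [Finset.mem_sdiff]; exact ⟨hz, by simp [hzu, hzw]⟩
    rw [hp, Finset.mem_singleton] at this
    exact Or.inr (Or.inr this)
  · rintro (rfl | rfl | rfl)
    · exact hsub (by simp)
    · exact hsub (by simp)
    · exact hpmem.1

lemma deg3_nbrs3 {a u w p : V} (ha : G.degree a = 3) (h1 : G.Adj a u) (h2 : G.Adj a w)
    (h3 : G.Adj a p) (huw : u ≠ w) (hup : p ≠ u) (hwp : p ≠ w) :
    ∀ z, G.Adj a z ↔ z = u ∨ z = w ∨ z = p := by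
  obtain ⟨p', hp'u, hp'w, hadj, hiff⟩ := deg3_nbrs ha h1 h2 huw
  have : p = p' := by
    rcases (hiff p).1 h3 with h | h | h
    · exact absurd h hup
    · exact absurd h hwp
    · exact h
  subst this
  exact hiff

lemma ncard_le_one' {s : Set V} {a : V} (h : s ⊆ {a}) : s.ncard ≤ 1 := by
  calc s.ncard ≤ ({a} : Set V).ncard := Set.ncard_le_ncard h (Set.toFinite _)
  _ = 1 := Set.ncard_singleton a

lemma ncard_le_two' {s : Set V} {a b : V} (h : s ⊆ {a, b}) : s.ncard ≤ 2 := by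
  calc s.ncard ≤ ({a, b} : Set V).ncard := Set.ncard_le_ncard h (Set.toFinite _)
  _ ≤ 2 := by
      calc (insert a {b} : Set V).ncard ≤ ({b} : Set V).ncard + 1 := Set.ncard_insert_le _ _
      _ = 2 := by rw [Set.ncard_singleton]

lemma ncard_le_three' {s : Set V} {a b c : V} (h : s ⊆ {a, b, c}) : s.ncard ≤ 3 := by
  calc s.ncard ≤ ({a, b, c} : Set V).ncard := Set.ncard_le_ncard h (Set.toFinite _)
  _ ≤ 3 := by
      calc (insert a {b, c} : Set V).ncard ≤ ({b, c} : Set V).ncard + 1 := Set.ncard_insert_le _ _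
      _ ≤ 3 := by
        have : (insert b {c} : Set V).ncard ≤ ({c} : Set V).ncard + 1 := Set.ncard_insert_le _ _
        rw [Set.ncard_singleton] at this; omega

lemma ncard_union_singleton_le {s t : Set V} {a : V} (h : s ⊆ t ∪ {a}) :
    s.ncard ≤ t.ncard + 1 := by
  calc s.ncard ≤ (t ∪ {a}).ncard := Set.ncard_le_ncard h (Set.toFinite _)
  _ ≤ t.ncard + ({a} : Set V).ncard := Set.ncard_union_le _ _
  _ = t.ncard + 1 := by rw [Set.ncard_singleton]

lemma out_nbrs_le4 {D : Set V} {p t : V} (hdeg : G.degree p ≤ 5) (hadj : G.Adj p t)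
    (ht : t ∈ D) : {u | G.Adj p u ∧ u ∉ D}.ncard ≤ 4 := by
  classical
  have hsub : {u | G.Adj p u ∧ u ∉ D} ⊆ ↑((G.neighborFinset p).erase t) := by
    rintro u ⟨h1, h2⟩
    simp only [Finset.coe_erase, Set.mem_diff, Finset.coe_sort_coe, Finset.mem_coe,
      SimpleGraph.mem_neighborFinset, Set.mem_singleton_iff]
    exact ⟨h1, fun e => (e ▸ h2) ht⟩
  have h1 : {u | G.Adj p u ∧ u ∉ D}.ncard ≤ ((G.neighborFinset p).erase t).card := by
    rw [← Set.ncard_coe_finset]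
    exact Set.ncard_le_ncard hsub (Set.toFinite _)
  have h2 : ((G.neighborFinset p).erase t).card = (G.neighborFinset p).card - 1 :=
    Finset.card_erase_of_mem ((SimpleGraph.mem_neighborFinset _ _ _).2 hadj)
  have h3 : (G.neighborFinset p).card = G.degree p := G.card_neighborFinset_eq_degree p
  omega

lemma set3_comm {v x y : V} : ({v, x, y} : Set V) = {v, y, x} := by
  rw [Set.pair_comm]

lemma tri_swap {v x y : V} (h : TriOn G v x y) : TriOn G v y x :=
  ⟨h.2.2, h.2.1.symm, h.1⟩

/-- distinctness of two triangles on `v` -/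
lemma tri_ne (hG : NoC45 G) {v x y x' y' : V} (h1 : TriOn G v x y) (h2 : TriOn G v x' y')
    (hT : ({v, x, y} : Set V) ≠ {v, x', y'}) : x ≠ x' := by
  rintro rfl
  have hyy : y ≠ y' := by rintro rfl; exact hT rfl
  exact c4elim hG h1.2.2 h1.2.1.symm h2.2.1 h2.2.2.symm h1.1.ne hyy

/-- a further triangle vertex is distinct from a poor triangle's 3-vertex -/
lemma extraA (hG : NoC45 G) {v a b cc dd p q : V} (htri : TriOn G v a b)
    (hT : ({v, a, b} : Set V) ≠ {v, cc, dd})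
    (hNc : ∀ z, G.Adj cc z ↔ z = v ∨ z = dd ∨ z = p)
    (hNd : ∀ z, G.Adj dd z ↔ z = v ∨ z = cc ∨ z = q)
    (hpv : ¬ G.Adj v p) (hqv : ¬ G.Adj v q) :
    a ≠ cc ∧ a ≠ dd ∧ b ≠ cc ∧ b ≠ dd := by
  refine ⟨?_, ?_, ?_, ?_⟩
  · rintro rfl
    rcases (hNc b).1 htri.2.1 with rfl | rfl | rfl
    · exact htri.2.2.ne rfl
    · exact hT rfl
    · exact hpv htri.2.2
  · rintro rfl
    rcases (hNd b).1 htri.2.1 with rfl | rfl | rfl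
    · exact htri.2.2.ne rfl
    · exact hT set3_comm
    · exact hqv htri.2.2
  · rintro rfl
    rcases (hNc a).1 htri.2.1.symm with rfl | rfl | rfl
    · exact htri.1.ne rfl
    · exact hT set3_comm
    · exact hpv htri.1
  · rintro rfl
    rcases (hNd a).1 htri.2.1.symm with rfl | rfl | rfl
    · exact htri.1.ne rfl
    · exact hT rfl
    · exact hqv htri.1

/-- a bad 3-vertex adjacent to `v` on a triangle avoiding `v` differs from the
3-vertices of a poor triangle at `v` -/
lemma extraB (hG : NoC45 G) {v aa x y cc dd p q : V}
    (hNa : ∀ z, G.Adj aa z ↔ z = v ∨ z = x ∨ z = y)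
    (hxy : G.Adj x y) (hxv : x ≠ v) (hyv : y ≠ v)
    (htc : TriOn G v cc dd)
    (hNc : ∀ z, G.Adj cc z ↔ z = v ∨ z = dd ∨ z = p)
    (hNd : ∀ z, G.Adj dd z ↔ z = v ∨ z = cc ∨ z = q)
    (hpv : ¬ G.Adj v p) (hqv : ¬ G.Adj v q)
    (hpne : p ≠ v) : aa ≠ cc := by
  rintro rfl
  have hdd : dd = x ∨ dd = y := by
    rcases (hNa dd).1 htc.2.1 with rfl | h | h
    · exact absurd rfl htc.2.2.ne'
    · exact Or.inl h
    · exact Or.inr h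
  have hadjp : G.Adj aa p := (hNc p).2 (Or.inr (Or.inr rfl))
  have hp : p = x ∨ p = y := by
    rcases (hNa p).1 hadjp with h | h | h
    · exact absurd h hpne
    · exact Or.inl h
    · exact Or.inr h
  have hdp : dd ≠ p := by rintro rfl; exact hpv htc.2.2
  have hddp : G.Adj dd p := by
    rcases hdd with rfl | rfl <;> rcases hp with rfl | rfl
    · exact absurd rfl hdp
    · exact hxy
    · exact hxy.symm
    · exact absurd rfl hdp
  rcases (hNd p).1 hddp with rfl | rfl | rfl
  · exact hpne rfl
  · exact hpv htc.1
  · exact hpne (common_nbr hG htc.1 htc.2.2 htc.2.1.ne hadjp.symm hddp.symm)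

lemma deg8_nbrs {v x1 x2 x3 x4 x5 x6 x7 x8 : V} (hd : G.degree v = 8)
    (h1 : G.Adj v x1) (h2 : G.Adj v x2) (h3 : G.Adj v x3) (h4 : G.Adj v x4)
    (h5 : G.Adj v x5) (h6 : G.Adj v x6) (h7 : G.Adj v x7) (h8 : G.Adj v x8)
    (e12 : x1 ≠ x2) (e13 : x1 ≠ x3) (e14 : x1 ≠ x4) (e15 : x1 ≠ x5) (e16 : x1 ≠ x6)
    (e17 : x1 ≠ x7) (e18 : x1 ≠ x8)
    (e23 : x2 ≠ x3) (e24 : x2 ≠ x4) (e25 : x2 ≠ x5) (e26 : x2 ≠ x6) (e27 : x2 ≠ x7)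
    (e28 : x2 ≠ x8)
    (e34 : x3 ≠ x4) (e35 : x3 ≠ x5) (e36 : x3 ≠ x6) (e37 : x3 ≠ x7) (e38 : x3 ≠ x8)
    (e45 : x4 ≠ x5) (e46 : x4 ≠ x6) (e47 : x4 ≠ x7) (e48 : x4 ≠ x8)
    (e56 : x5 ≠ x6) (e57 : x5 ≠ x7) (e58 : x5 ≠ x8)
    (e67 : x6 ≠ x7) (e68 : x6 ≠ x8) (e78 : x7 ≠ x8) :
    ∀ z, G.Adj v z ↔ z = x1 ∨ z = x2 ∨ z = x3 ∨ z = x4 ∨ z = x5 ∨ z = x6 ∨ z = x7 ∨ z = x8 := by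
  classical
  have hcS : ({x1, x2, x3, x4, x5, x6, x7, x8} : Finset V).card = 8 := by
    rw [Finset.card_insert_of_notMem (by simp [e12, e13, e14, e15, e16, e17, e18]),
        Finset.card_insert_of_notMem (by simp [e23, e24, e25, e26, e27, e28]),
        Finset.card_insert_of_notMem (by simp [e34, e35, e36, e37, e38]),
        Finset.card_insert_of_notMem (by simp [e45, e46, e47, e48]),
        Finset.card_insert_of_notMem (by simp [e56, e57, e58]),
        Finset.card_insert_of_notMem (by simp [e67, e68]),
        Finset.card_insert_of_notMem (by simp [e78]),
        Finset.card_singleton]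
  have hsub : ({x1, x2, x3, x4, x5, x6, x7, x8} : Finset V) ⊆ G.neighborFinset v := by
    intro z hz
    simp only [Finset.mem_insert, Finset.mem_singleton] at hz
    rw [SimpleGraph.mem_neighborFinset]
    rcases hz with rfl | rfl | rfl | rfl | rfl | rfl | rfl | rfl <;> assumption
  have hN : (G.neighborFinset v).card = 8 := by
    rw [SimpleGraph.card_neighborFinset_eq_degree]; exact hd
  have heq := Finset.eq_of_subset_of_card_le hsub (by rw [hN, hcS])
  intro z
  rw [← SimpleGraph.mem_neighborFinset, ← heq]
  simp

end AuxHelpers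


/-- If an 8-vertex `v` of `G` lies on three distinct poor triangles, then (i) `v` lies
on no further triangle containing a 3-vertex whose pendant neighbor has degree at most
5, and (ii) `v` is not adjacent to two distinct bad 3-vertices lying on triangles not
containing `v`. -/

theorem stmt17 {V : Type*} [Fintype V] (G : SimpleGraph V) [DecidableRel G.Adj]
    (hG : NoC45 G) (hmin : MinCE G ![3, 0, 0])
    (v : V) (T₁ T₂ T₃ : Set V) (hd : G.degree v = 8)
    (h12 : T₁ ≠ T₂) (h13 : T₁ ≠ T₃) (h23 : T₂ ≠ T₃)
    (hp1 : PoorAt G v T₁) (hp2 : PoorAt G v T₂) (hp3 : PoorAt G v T₃) :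
    (¬ ∃ a b : V, TriOn G v a b ∧
        ({v, a, b} : Set V) ≠ T₁ ∧ ({v, a, b} : Set V) ≠ T₂ ∧
        ({v, a, b} : Set V) ≠ T₃ ∧
        G.degree a = 3 ∧ ∃ x : V, G.Adj a x ∧ x ≠ v ∧ x ≠ b ∧ G.degree x ≤ 5) ∧
    (¬ ∃ a b : V, a ≠ b ∧ PendantBad G v a ∧ PendantBad G v b) := by

  classical
  obtain ⟨a1, b1, ⟨hva1, ha1b1, hvb1⟩, hTe1, hda1, hdb1, hA1, hB1⟩ := hp1
  obtain ⟨a2, b2, ⟨hva2, ha2b2, hvb2⟩, hTe2, hda2, hdb2, hA2, hB2⟩ := hp2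
  obtain ⟨a3, b3, ⟨hva3, ha3b3, hvb3⟩, hTe3, hda3, hdb3, hA3, hB3⟩ := hp3
  -- extract pendants
  obtain ⟨p1, hp1v, hp1b1, ha1p1, hNa1⟩ := deg3_nbrs hda1 hva1.symm ha1b1 hvb1.ne
  obtain ⟨q1, hq1v, hq1a1, hb1q1, hNb1⟩ := deg3_nbrs hdb1 hvb1.symm ha1b1.symm hva1.ne
  obtain ⟨p2, hp2v, hp2b2, ha2p2, hNa2⟩ := deg3_nbrs hda2 hva2.symm ha2b2 hvb2.ne
  obtain ⟨q2, hq2v, hq2a2, hb2q2, hNb2⟩ := deg3_nbrs hdb2 hvb2.symm ha2b2.symm hva2.ne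
  obtain ⟨p3, hp3v, hp3b3, ha3p3, hNa3⟩ := deg3_nbrs hda3 hva3.symm ha3b3 hvb3.ne
  obtain ⟨q3, hq3v, hq3a3, hb3q3, hNb3⟩ := deg3_nbrs hdb3 hvb3.symm ha3b3.symm hva3.ne
  have hdp1 : G.degree p1 ≤ 5 := hA1 p1 ha1p1 hp1v hp1b1
  have hdq1 : G.degree q1 ≤ 5 := hB1 q1 hb1q1 hq1v hq1a1
  have hdp2 : G.degree p2 ≤ 5 := hA2 p2 ha2p2 hp2v hp2b2
  have hdq2 : G.degree q2 ≤ 5 := hB2 q2 hb2q2 hq2v hq2a2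
  have hdp3 : G.degree p3 ≤ 5 := hA3 p3 ha3p3 hp3v hp3b3
  have hdq3 : G.degree q3 ≤ 5 := hB3 q3 hb3q3 hq3v hq3a3
  have hnvp1 : ¬ G.Adj v p1 := tri_pend_not_adj hG hva1 hvb1 ha1b1 ha1p1 hp1b1
  have hnvq1 : ¬ G.Adj v q1 := tri_pend_not_adj hG hvb1 hva1 ha1b1.symm hb1q1 hq1a1
  have hnvp2 : ¬ G.Adj v p2 := tri_pend_not_adj hG hva2 hvb2 ha2b2 ha2p2 hp2b2
  have hnvq2 : ¬ G.Adj v q2 := tri_pend_not_adj hG hvb2 hva2 ha2b2.symm hb2q2 hq2a2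
  have hnvp3 : ¬ G.Adj v p3 := tri_pend_not_adj hG hva3 hvb3 ha3b3 ha3p3 hp3b3
  have hnvq3 : ¬ G.Adj v q3 := tri_pend_not_adj hG hvb3 hva3 ha3b3.symm hb3q3 hq3a3
  have ht1 : TriOn G v a1 b1 := ⟨hva1, ha1b1, hvb1⟩
  have ht2 : TriOn G v a2 b2 := ⟨hva2, ha2b2, hvb2⟩
  have ht3 : TriOn G v a3 b3 := ⟨hva3, ha3b3, hvb3⟩
  -- set inequalities
  have hS12 : ({v, a1, b1} : Set V) ≠ {v, a2, b2} := by rw [← hTe1, ← hTe2]; exact h12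
  have hS13 : ({v, a1, b1} : Set V) ≠ {v, a3, b3} := by rw [← hTe1, ← hTe3]; exact h13
  have hS23 : ({v, a2, b2} : Set V) ≠ {v, a3, b3} := by rw [← hTe2, ← hTe3]; exact h23
  -- pairwise distinctness of the six 3-vertices
  have na1a2 : a1 ≠ a2 := tri_ne hG ht1 ht2 hS12
  have na1b2 : a1 ≠ b2 := tri_ne hG ht1 (tri_swap ht2) (fun h => hS12 (h.trans set3_comm))
  have nb1a2 : b1 ≠ a2 := tri_ne hG (tri_swap ht1) ht2 (fun h => hS12 (set3_comm.trans h))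
  have nb1b2 : b1 ≠ b2 := tri_ne hG (tri_swap ht1) (tri_swap ht2)
    (fun h => hS12 ((set3_comm.trans h).trans set3_comm))
  have na1a3 : a1 ≠ a3 := tri_ne hG ht1 ht3 hS13
  have na1b3 : a1 ≠ b3 := tri_ne hG ht1 (tri_swap ht3) (fun h => hS13 (h.trans set3_comm))
  have nb1a3 : b1 ≠ a3 := tri_ne hG (tri_swap ht1) ht3 (fun h => hS13 (set3_comm.trans h))
  have nb1b3 : b1 ≠ b3 := tri_ne hG (tri_swap ht1) (tri_swap ht3)
    (fun h => hS13 ((set3_comm.trans h).trans set3_comm))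
  have na2a3 : a2 ≠ a3 := tri_ne hG ht2 ht3 hS23
  have na2b3 : a2 ≠ b3 := tri_ne hG ht2 (tri_swap ht3) (fun h => hS23 (h.trans set3_comm))
  have nb2a3 : b2 ≠ a3 := tri_ne hG (tri_swap ht2) ht3 (fun h => hS23 (set3_comm.trans h))
  have nb2b3 : b2 ≠ b3 := tri_ne hG (tri_swap ht2) (tri_swap ht3)
    (fun h => hS23 ((set3_comm.trans h).trans set3_comm))
  have hcap0 : (![3,0,0] : Fin 3 → ℕ) 0 = 3 := rfl
  have hcapn : ∀ i : Fin 3, i ≠ 0 → (![3,0,0] : Fin 3 → ℕ) i = 0 := by decide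
  constructor
  · -- part (i)
    rintro ⟨a, b, ⟨hvaA, haAbB, hvbB⟩, hTa1, hTa2, hTa3, hdaA, x, haAx, hxv, hxb, hdx⟩
    have htA : TriOn G v a b := ⟨hvaA, haAbB, hvbB⟩
    have hNaA : ∀ z, G.Adj a z ↔ z = v ∨ z = b ∨ z = x :=
      deg3_nbrs3 hdaA hvaA.symm haAbB haAx hvbB.ne hxv hxb
    have hnvx : ¬ G.Adj v x := tri_pend_not_adj hG hvaA hvbB haAbB haAx hxb
    have hTa1' : ({v, a, b} : Set V) ≠ {v, a1, b1} := by rw [hTe1] at hTa1; exact hTa1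
    have hTa2' : ({v, a, b} : Set V) ≠ {v, a2, b2} := by rw [hTe2] at hTa2; exact hTa2
    have hTa3' : ({v, a, b} : Set V) ≠ {v, a3, b3} := by rw [hTe3] at hTa3; exact hTa3
    obtain ⟨naa1, nab1, nba1, nbb1⟩ := extraA hG htA hTa1' hNa1 hNb1 hnvp1 hnvq1
    obtain ⟨naa2, nab2, nba2, nbb2⟩ := extraA hG htA hTa2' hNa2 hNb2 hnvp2 hnvq2
    obtain ⟨naa3, nab3, nba3, nbb3⟩ := extraA hG htA hTa3' hNa3 hNb3 hnvp3 hnvq3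
    have hNv : ∀ z, G.Adj v z ↔ z = a1 ∨ z = b1 ∨ z = a2 ∨ z = b2 ∨ z = a3 ∨ z = b3 ∨
        z = a ∨ z = b :=
      deg8_nbrs hd hva1 hvb1 hva2 hvb2 hva3 hvb3 hvaA hvbB
        ha1b1.ne na1a2 na1b2 na1a3 na1b3 naa1.symm nba1.symm
        nb1a2 nb1b2 nb1a3 nb1b3 nab1.symm nbb1.symm
        ha2b2.ne na2a3 na2b3 naa2.symm nba2.symm
        nb2a3 nb2b3 nab2.symm nbb2.symm
        ha3b3.ne naa3.symm nba3.symm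
        nab3.symm nbb3.symm haAbB.ne
    set D : Set V := {v, a1, b1, a2, b2, a3, b3, a} with hD
    have hmemD : ∀ u, u ∈ D ↔ u = v ∨ u = a1 ∨ u = b1 ∨ u = a2 ∨ u = b2 ∨ u = a3 ∨
        u = b3 ∨ u = a := by
      intro u; simp [hD]
    have hvD : v ∈ D := (hmemD v).2 (Or.inl rfl)
    have ha1D : a1 ∈ D := (hmemD a1).2 (Or.inr (Or.inl rfl))
    have hb1D : b1 ∈ D := (hmemD b1).2 (Or.inr (Or.inr (Or.inl rfl)))
    have ha2D : a2 ∈ D := (hmemD a2).2 (Or.inr (Or.inr (Or.inr (Or.inl rfl))))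
    have hb2D : b2 ∈ D := (hmemD b2).2 (Or.inr (Or.inr (Or.inr (Or.inr (Or.inl rfl)))))
    have ha3D : a3 ∈ D :=
      (hmemD a3).2 (Or.inr (Or.inr (Or.inr (Or.inr (Or.inr (Or.inl rfl))))))
    have hb3D : b3 ∈ D :=
      (hmemD b3).2 (Or.inr (Or.inr (Or.inr (Or.inr (Or.inr (Or.inr (Or.inl rfl)))))))
    have haD : a ∈ D :=
      (hmemD a).2 (Or.inr (Or.inr (Or.inr (Or.inr (Or.inr (Or.inr (Or.inr rfl)))))))
    -- every member of D is v or a neighbour of v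
    have hDchar : ∀ u ∈ D, u = v ∨ G.Adj v u := by
      intro u hu
      rcases (hmemD u).1 hu with rfl | rfl | rfl | rfl | rfl | rfl | rfl | rfl
      · exact Or.inl rfl
      all_goals exact Or.inr (by assumption)
    have hnotD : ∀ pp, pp ≠ v → ¬ G.Adj v pp → pp ∉ D := by
      intro pp h1 h2 hm
      rcases hDchar pp hm with rfl | h
      · exact h1 rfl
      · exact h2 h
    have hp1D : p1 ∉ D := hnotD p1 hp1v hnvp1
    have hq1D : q1 ∉ D := hnotD q1 hq1v hnvq1
    have hp2D : p2 ∉ D := hnotD p2 hp2v hnvp2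
    have hq2D : q2 ∉ D := hnotD q2 hq2v hnvq2
    have hp3D : p3 ∉ D := hnotD p3 hp3v hnvp3
    have hq3D : q3 ∉ D := hnotD q3 hq3v hnvq3
    have hxD : x ∉ D := hnotD x hxv hnvx
    have hbD : b ∉ D := by
      intro hm
      rcases (hmemD b).1 hm with rfl | rfl | rfl | rfl | rfl | rfl | rfl | rfl
      · exact hvbB.ne rfl
      · exact nba1 rfl
      · exact nbb1 rfl
      · exact nba2 rfl
      · exact nbb2 rfl
      · exact nba3 rfl
      · exact nbb3 rfl
      · exact haAbB.ne rfl
    obtain ⟨f0, hf0⟩ := exists_del_coloring hmin D ⟨v, hvD⟩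
    set P : Finset V := {p1, q1, p2, q2, p3, q3, x} with hPdef
    have hPbound : ∀ p ∈ P, ({u | G.Adj p u ∧ u ∉ D}).ncard ≤ 4 := by
      intro p hp
      simp only [hPdef, Finset.mem_insert, Finset.mem_singleton] at hp
      rcases hp with rfl | rfl | rfl | rfl | rfl | rfl | rfl
      · exact out_nbrs_le4 hdp1 ha1p1.symm ha1D
      · exact out_nbrs_le4 hdq1 hb1q1.symm hb1D
      · exact out_nbrs_le4 hdp2 ha2p2.symm ha2D
      · exact out_nbrs_le4 hdq2 hb2q2.symm hb2D
      · exact out_nbrs_le4 hdp3 ha3p3.symm ha3D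
      · exact out_nbrs_le4 hdq3 hb3q3.symm hb3D
      · exact out_nbrs_le4 hdx haAx.symm haD
    obtain ⟨f, hOk, hSlack⟩ := fix_pendants hPbound hf0
    -- D-neighbour facts for surviving special vertices
    have hDadjp1 : ∀ u, G.Adj p1 u → u ∈ D → u = a1 := by
      intro u hadj hu
      rcases (hmemD u).1 hu with rfl | rfl | rfl | rfl | rfl | rfl | rfl | rfl
      · exact absurd hadj.symm hnvp1
      · rfl
      · exact absurd (common_nbr hG hva1 hvb1 ha1b1.ne ha1p1.symm hadj) hp1v
      · exact absurd (common_nbr hG hva1 hva2 na1a2 ha1p1.symm hadj) hp1v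
      · exact absurd (common_nbr hG hva1 hvb2 na1b2 ha1p1.symm hadj) hp1v
      · exact absurd (common_nbr hG hva1 hva3 na1a3 ha1p1.symm hadj) hp1v
      · exact absurd (common_nbr hG hva1 hvb3 na1b3 ha1p1.symm hadj) hp1v
      · exact absurd (common_nbr hG hva1 hvaA naa1.symm ha1p1.symm hadj) hp1v
    have hDadjq1 : ∀ u, G.Adj q1 u → u ∈ D → u = b1 := by
      intro u hadj hu
      rcases (hmemD u).1 hu with rfl | rfl | rfl | rfl | rfl | rfl | rfl | rfl
      · exact absurd hadj.symm hnvq1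
      · exact absurd (common_nbr hG hvb1 hva1 ha1b1.ne' hb1q1.symm hadj) hq1v
      · rfl
      · exact absurd (common_nbr hG hvb1 hva2 nb1a2 hb1q1.symm hadj) hq1v
      · exact absurd (common_nbr hG hvb1 hvb2 nb1b2 hb1q1.symm hadj) hq1v
      · exact absurd (common_nbr hG hvb1 hva3 nb1a3 hb1q1.symm hadj) hq1v
      · exact absurd (common_nbr hG hvb1 hvb3 nb1b3 hb1q1.symm hadj) hq1v
      · exact absurd (common_nbr hG hvb1 hvaA nab1.symm hb1q1.symm hadj) hq1v
    have hDadjp2 : ∀ u, G.Adj p2 u → u ∈ D → u = a2 := by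
      intro u hadj hu
      rcases (hmemD u).1 hu with rfl | rfl | rfl | rfl | rfl | rfl | rfl | rfl
      · exact absurd hadj.symm hnvp2
      · exact absurd (common_nbr hG hva2 hva1 na1a2.symm ha2p2.symm hadj) hp2v
      · exact absurd (common_nbr hG hva2 hvb1 nb1a2.symm ha2p2.symm hadj) hp2v
      · rfl
      · exact absurd (common_nbr hG hva2 hvb2 ha2b2.ne ha2p2.symm hadj) hp2v
      · exact absurd (common_nbr hG hva2 hva3 na2a3 ha2p2.symm hadj) hp2v
      · exact absurd (common_nbr hG hva2 hvb3 na2b3 ha2p2.symm hadj) hp2v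
      · exact absurd (common_nbr hG hva2 hvaA naa2.symm ha2p2.symm hadj) hp2v
    have hDadjq2 : ∀ u, G.Adj q2 u → u ∈ D → u = b2 := by
      intro u hadj hu
      rcases (hmemD u).1 hu with rfl | rfl | rfl | rfl | rfl | rfl | rfl | rfl
      · exact absurd hadj.symm hnvq2
      · exact absurd (common_nbr hG hvb2 hva1 na1b2.symm hb2q2.symm hadj) hq2v
      · exact absurd (common_nbr hG hvb2 hvb1 nb1b2.symm hb2q2.symm hadj) hq2v
      · exact absurd (common_nbr hG hvb2 hva2 ha2b2.ne' hb2q2.symm hadj) hq2v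
      · rfl
      · exact absurd (common_nbr hG hvb2 hva3 nb2a3 hb2q2.symm hadj) hq2v
      · exact absurd (common_nbr hG hvb2 hvb3 nb2b3 hb2q2.symm hadj) hq2v
      · exact absurd (common_nbr hG hvb2 hvaA nab2.symm hb2q2.symm hadj) hq2v
    have hDadjp3 : ∀ u, G.Adj p3 u → u ∈ D → u = a3 := by
      intro u hadj hu
      rcases (hmemD u).1 hu with rfl | rfl | rfl | rfl | rfl | rfl | rfl | rfl
      · exact absurd hadj.symm hnvp3
      · exact absurd (common_nbr hG hva3 hva1 na1a3.symm ha3p3.symm hadj) hp3v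
      · exact absurd (common_nbr hG hva3 hvb1 nb1a3.symm ha3p3.symm hadj) hp3v
      · exact absurd (common_nbr hG hva3 hva2 na2a3.symm ha3p3.symm hadj) hp3v
      · exact absurd (common_nbr hG hva3 hvb2 nb2a3.symm ha3p3.symm hadj) hp3v
      · rfl
      · exact absurd (common_nbr hG hva3 hvb3 ha3b3.ne ha3p3.symm hadj) hp3v
      · exact absurd (common_nbr hG hva3 hvaA naa3.symm ha3p3.symm hadj) hp3v
    have hDadjq3 : ∀ u, G.Adj q3 u → u ∈ D → u = b3 := by
      intro u hadj hu
      rcases (hmemD u).1 hu with rfl | rfl | rfl | rfl | rfl | rfl | rfl | rfl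
      · exact absurd hadj.symm hnvq3
      · exact absurd (common_nbr hG hvb3 hva1 na1b3.symm hb3q3.symm hadj) hq3v
      · exact absurd (common_nbr hG hvb3 hvb1 nb1b3.symm hb3q3.symm hadj) hq3v
      · exact absurd (common_nbr hG hvb3 hva2 na2b3.symm hb3q3.symm hadj) hq3v
      · exact absurd (common_nbr hG hvb3 hvb2 nb2b3.symm hb3q3.symm hadj) hq3v
      · exact absurd (common_nbr hG hvb3 hva3 ha3b3.ne' hb3q3.symm hadj) hq3v
      · rfl
      · exact absurd (common_nbr hG hvb3 hvaA nab3.symm hb3q3.symm hadj) hq3v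
    have hDadjx : ∀ u, G.Adj x u → u ∈ D → u = a := by
      intro u hadj hu
      rcases (hmemD u).1 hu with rfl | rfl | rfl | rfl | rfl | rfl | rfl | rfl
      · exact absurd hadj.symm hnvx
      · exact absurd (common_nbr hG hvaA hva1 naa1 haAx.symm hadj) hxv
      · exact absurd (common_nbr hG hvaA hvb1 nab1 haAx.symm hadj) hxv
      · exact absurd (common_nbr hG hvaA hva2 naa2 haAx.symm hadj) hxv
      · exact absurd (common_nbr hG hvaA hvb2 nab2 haAx.symm hadj) hxv
      · exact absurd (common_nbr hG hvaA hva3 naa3 haAx.symm hadj) hxv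
      · exact absurd (common_nbr hG hvaA hvb3 nab3 haAx.symm hadj) hxv
      · rfl
    have hDadjb : ∀ u, G.Adj b u → u ∈ D → u = v ∨ u = a := by
      intro u hadj hu
      rcases (hmemD u).1 hu with rfl | rfl | rfl | rfl | rfl | rfl | rfl | rfl
      · exact Or.inl rfl
      · exact absurd ((hNa1 b).1 hadj.symm)
          (by push_neg; exact ⟨hvbB.ne', nbb1, fun h => hnvp1 (h ▸ hvbB)⟩)
      · exact absurd ((hNb1 b).1 hadj.symm)
          (by push_neg; exact ⟨hvbB.ne', nba1, fun h => hnvq1 (h ▸ hvbB)⟩)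
      · exact absurd ((hNa2 b).1 hadj.symm)
          (by push_neg; exact ⟨hvbB.ne', nbb2, fun h => hnvp2 (h ▸ hvbB)⟩)
      · exact absurd ((hNb2 b).1 hadj.symm)
          (by push_neg; exact ⟨hvbB.ne', nba2, fun h => hnvq2 (h ▸ hvbB)⟩)
      · exact absurd ((hNa3 b).1 hadj.symm)
          (by push_neg; exact ⟨hvbB.ne', nbb3, fun h => hnvp3 (h ▸ hvbB)⟩)
      · exact absurd ((hNb3 b).1 hadj.symm)
          (by push_neg; exact ⟨hvbB.ne', nba3, fun h => hnvq3 (h ▸ hvbB)⟩)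
      · exact Or.inr rfl
    -- the master coloring argument
    have master : ∀ γ α : Fin 3, (γ = 1 ∨ γ = 2) → γ ≠ f b → γ ≠ α →
        (α = 0 ∧ f b ≠ 0 ∨ (α ≠ 0 ∧ α ≠ f x ∧ α ≠ f b)) → False := by
      intro γ α hγ hγb hγα hα
      have hγ0 : γ ≠ 0 := by rcases hγ with rfl | rfl <;> decide
      set g : V → Fin 3 := fun u => if u = v then γ else if u = a then α else
        if u = a1 then 0 else if u = b1 then 0 else if u = a2 then 0 else
        if u = b2 then 0 else if u = a3 then 0 else if u = b3 then 0 else f u with hg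
      have hgv : g v = γ := by rw [hg]; simp
      have hga : g a = α := by rw [hg]; simp [hvaA.ne']
      have hga1 : g a1 = 0 := by rw [hg]; simp [hva1.ne', naa1.symm]
      have hgb1 : g b1 = 0 := by rw [hg]; simp [hvb1.ne', nab1.symm, ha1b1.ne']
      have hga2 : g a2 = 0 := by
        rw [hg]; simp [hva2.ne', naa2.symm, na1a2.symm, nb1a2.symm]
      have hgb2 : g b2 = 0 := by
        rw [hg]; simp [hvb2.ne', nab2.symm, na1b2.symm, nb1b2.symm, ha2b2.ne']
      have hga3 : g a3 = 0 := by
        rw [hg]; simp [hva3.ne', naa3.symm, na1a3.symm, nb1a3.symm, na2a3.symm, nb2a3.symm]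
      have hgb3 : g b3 = 0 := by
        rw [hg]
        simp [hvb3.ne', nab3.symm, na1b3.symm, nb1b3.symm, na2b3.symm, nb2b3.symm, ha3b3.ne']
      have hgout : ∀ u, u ∉ D → g u = f u := by
        intro u hu
        have := (hmemD u).1
        rw [hg]
        have h1 : ¬ (u = v) := fun h => hu ((hmemD u).2 (Or.inl h))
        have h2 : ¬ (u = a1) := fun h => hu ((hmemD u).2 (Or.inr (Or.inl h)))
        have h3 : ¬ (u = b1) := fun h => hu ((hmemD u).2 (Or.inr (Or.inr (Or.inl h))))
        have h4 : ¬ (u = a2) := fun h => hu ((hmemD u).2 (Or.inr (Or.inr (Or.inr (Or.inl h)))))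
        have h5 : ¬ (u = b2) := fun h =>
          hu ((hmemD u).2 (Or.inr (Or.inr (Or.inr (Or.inr (Or.inl h))))))
        have h6 : ¬ (u = a3) := fun h =>
          hu ((hmemD u).2 (Or.inr (Or.inr (Or.inr (Or.inr (Or.inr (Or.inl h)))))))
        have h7 : ¬ (u = b3) := fun h =>
          hu ((hmemD u).2 (Or.inr (Or.inr (Or.inr (Or.inr (Or.inr (Or.inr (Or.inl h))))))))
        have h8 : ¬ (u = a) := fun h =>
          hu ((hmemD u).2 (Or.inr (Or.inr (Or.inr (Or.inr (Or.inr (Or.inr (Or.inr h))))))))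
        simp [h1, h2, h3, h4, h5, h6, h7, h8]
      have hgb : g b = f b := hgout b hbD
      have hgx : g x = f x := hgout x hxD
      apply hmin.1
      refine ⟨g, fun w => ?_⟩
      by_cases hwv : w = v
      · subst hwv
        rw [hgv, hcapn γ hγ0]
        have he : {u | G.Adj w u ∧ g u = γ} = ∅ := by
          rw [Set.eq_empty_iff_forall_notMem]
          rintro u ⟨hadj, hcol⟩
          rcases (hNv u).1 hadj with rfl | rfl | rfl | rfl | rfl | rfl | rfl | rfl
          · rw [hga1] at hcol; exact hγ0 hcol.symm
          · rw [hgb1] at hcol; exact hγ0 hcol.symm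
          · rw [hga2] at hcol; exact hγ0 hcol.symm
          · rw [hgb2] at hcol; exact hγ0 hcol.symm
          · rw [hga3] at hcol; exact hγ0 hcol.symm
          · rw [hgb3] at hcol; exact hγ0 hcol.symm
          · rw [hga] at hcol; exact hγα hcol.symm
          · rw [hgb] at hcol; exact hγb hcol.symm
        rw [he, Set.ncard_empty]
      by_cases hwa : w = a
      · subst hwa
        rw [hga]
        rcases hα with ⟨h0, hb0⟩ | ⟨hn0, hnx, hnb⟩
        · rw [h0, hcap0]
          have hsub : {u | G.Adj w u ∧ g u = 0} ⊆ {x} := by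
            rintro u ⟨hadj, hcol⟩
            rcases (hNaA u).1 hadj with rfl | rfl | rfl
            · rw [hgv] at hcol; exact absurd hcol hγ0
            · rw [hgb] at hcol; exact absurd hcol hb0
            · rfl
          have := ncard_le_one' hsub
          omega
        · rw [hcapn α hn0]
          have he : {u | G.Adj w u ∧ g u = α} = ∅ := by
            rw [Set.eq_empty_iff_forall_notMem]
            rintro u ⟨hadj, hcol⟩
            rcases (hNaA u).1 hadj with rfl | rfl | rfl
            · rw [hgv] at hcol; exact hγα hcol
            · rw [hgb] at hcol; exact hnb hcol.symm
            · rw [hgx] at hcol; exact hnx hcol.symm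
          rw [he, Set.ncard_empty]
      by_cases hwa1 : w = a1
      · subst hwa1
        rw [hga1, hcap0]
        have hsub : {u | G.Adj w u ∧ g u = 0} ⊆ {b1, p1} := by
          rintro u ⟨hadj, hcol⟩
          rcases (hNa1 u).1 hadj with rfl | rfl | rfl
          · rw [hgv] at hcol; exact absurd hcol hγ0
          · exact Or.inl rfl
          · exact Or.inr rfl
        have := ncard_le_two' hsub
        omega
      by_cases hwb1 : w = b1
      · subst hwb1
        rw [hgb1, hcap0]
        have hsub : {u | G.Adj w u ∧ g u = 0} ⊆ {a1, q1} := by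
          rintro u ⟨hadj, hcol⟩
          rcases (hNb1 u).1 hadj with rfl | rfl | rfl
          · rw [hgv] at hcol; exact absurd hcol hγ0
          · exact Or.inl rfl
          · exact Or.inr rfl
        have := ncard_le_two' hsub
        omega
      by_cases hwa2 : w = a2
      · subst hwa2
        rw [hga2, hcap0]
        have hsub : {u | G.Adj w u ∧ g u = 0} ⊆ {b2, p2} := by
          rintro u ⟨hadj, hcol⟩
          rcases (hNa2 u).1 hadj with rfl | rfl | rfl
          · rw [hgv] at hcol; exact absurd hcol hγ0
          · exact Or.inl rfl
          · exact Or.inr rfl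
        have := ncard_le_two' hsub
        omega
      by_cases hwb2 : w = b2
      · subst hwb2
        rw [hgb2, hcap0]
        have hsub : {u | G.Adj w u ∧ g u = 0} ⊆ {a2, q2} := by
          rintro u ⟨hadj, hcol⟩
          rcases (hNb2 u).1 hadj with rfl | rfl | rfl
          · rw [hgv] at hcol; exact absurd hcol hγ0
          · exact Or.inl rfl
          · exact Or.inr rfl
        have := ncard_le_two' hsub
        omega
      by_cases hwa3 : w = a3
      · subst hwa3
        rw [hga3, hcap0]
        have hsub : {u | G.Adj w u ∧ g u = 0} ⊆ {b3, p3} := by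
          rintro u ⟨hadj, hcol⟩
          rcases (hNa3 u).1 hadj with rfl | rfl | rfl
          · rw [hgv] at hcol; exact absurd hcol hγ0
          · exact Or.inl rfl
          · exact Or.inr rfl
        have := ncard_le_two' hsub
        omega
      by_cases hwb3 : w = b3
      · subst hwb3
        rw [hgb3, hcap0]
        have hsub : {u | G.Adj w u ∧ g u = 0} ⊆ {a3, q3} := by
          rintro u ⟨hadj, hcol⟩
          rcases (hNb3 u).1 hadj with rfl | rfl | rfl
          · rw [hgv] at hcol; exact absurd hcol hγ0
          · exact Or.inl rfl
          · exact Or.inr rfl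
        have := ncard_le_two' hsub
        omega
      -- now w ∉ D
      have hwD : w ∉ D := by
        intro hm
        rcases (hmemD w).1 hm with rfl | rfl | rfl | rfl | rfl | rfl | rfl | rfl
        · exact hwv rfl
        · exact hwa1 rfl
        · exact hwb1 rfl
        · exact hwa2 rfl
        · exact hwb2 rfl
        · exact hwa3 rfl
        · exact hwb3 rfl
        · exact hwa rfl
      have hgw : g w = f w := hgout w hwD
      rw [hgw]
      -- helper for pendant vertices
      have key_pend : ∀ t : V, w ∈ P → (∀ u, G.Adj w u → u ∈ D → u = t) →
          (g t = f w → f w = 0) →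
          {u | G.Adj w u ∧ g u = f w}.ncard ≤ (![3,0,0] : Fin 3 → ℕ) (f w) := by
        intro t hwP hDt htcol
        by_cases hw0 : f w = 0
        · rw [hw0, hcap0]
          have hsub : {u | G.Adj w u ∧ g u = 0} ⊆
              {u | G.Adj w u ∧ u ∉ D ∧ f u = 0} ∪ {t} := by
            rintro u ⟨hadj, hcol⟩
            by_cases huD : u ∈ D
            · exact Or.inr (hDt u hadj huD)
            · exact Or.inl ⟨hadj, huD, by rw [← hgout u huD]; exact hcol⟩
          have h1 := ncard_union_singleton_le hsub
          have h2 := hSlack w hwP hw0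
          omega
        · rw [hcapn (f w) hw0]
          have he : {u | G.Adj w u ∧ g u = f w} = ∅ := by
            rw [Set.eq_empty_iff_forall_notMem]
            rintro u ⟨hadj, hcol⟩
            by_cases huD : u ∈ D
            · have := hDt u hadj huD; subst this
              exact hw0 (htcol hcol)
            · have : f u = f w := by rw [← hgout u huD]; exact hcol
              have hne := hOk w hwD
              rw [hcapn (f w) hw0] at hne
              have hmem : u ∈ {u | G.Adj w u ∧ u ∉ D ∧ f u = f w} := ⟨hadj, huD, this⟩
              have := Set.ncard_eq_zero (Set.toFinite _) |>.mp (Nat.le_zero.1 hne)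
              rw [this] at hmem
              exact hmem
          rw [he, Set.ncard_empty]
      by_cases hwp1 : w = p1
      · subst hwp1
        exact key_pend a1 (by simp [hPdef]) hDadjp1 (fun h => by rw [hga1] at h; exact h.symm)
      by_cases hwq1 : w = q1
      · subst hwq1
        exact key_pend b1 (by simp [hPdef]) hDadjq1 (fun h => by rw [hgb1] at h; exact h.symm)
      by_cases hwp2 : w = p2
      · subst hwp2
        exact key_pend a2 (by simp [hPdef]) hDadjp2 (fun h => by rw [hga2] at h; exact h.symm)
      by_cases hwq2 : w = q2
      · subst hwq2
        exact key_pend b2 (by simp [hPdef]) hDadjq2 (fun h => by rw [hgb2] at h; exact h.symm)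
      by_cases hwp3 : w = p3
      · subst hwp3
        exact key_pend a3 (by simp [hPdef]) hDadjp3 (fun h => by rw [hga3] at h; exact h.symm)
      by_cases hwq3 : w = q3
      · subst hwq3
        exact key_pend b3 (by simp [hPdef]) hDadjq3 (fun h => by rw [hgb3] at h; exact h.symm)
      by_cases hwx : w = x
      · subst hwx
        refine key_pend a (by simp [hPdef]) hDadjx (fun h => ?_)
        rw [hga] at h
        rcases hα with ⟨h0, _⟩ | ⟨_, hnx, _⟩
        · rw [h0] at h; exact h.symm
        · exact absurd h hnx
      -- default vertex
      have hsub : {u | G.Adj w u ∧ g u = f w} ⊆ {u | G.Adj w u ∧ u ∉ D ∧ f u = f w} := by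
        rintro u ⟨hadj, hcol⟩
        by_cases huD : u ∈ D
        · exfalso
          rcases (hmemD u).1 huD with rfl | rfl | rfl | rfl | rfl | rfl | rfl | rfl
          · rcases (hNv w).1 hadj.symm with rfl | rfl | rfl | rfl | rfl | rfl | rfl | rfl
            · exact hwa1 rfl
            · exact hwb1 rfl
            · exact hwa2 rfl
            · exact hwb2 rfl
            · exact hwa3 rfl
            · exact hwb3 rfl
            · exact hwa rfl
            · rw [hgv] at hcol; exact hγb (hcol.trans hgw.symm ▸ hcol)
          · rcases (hNa1 w).1 hadj.symm with rfl | rfl | rfl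
            · exact hwv rfl
            · exact hwb1 rfl
            · exact hwp1 rfl
          · rcases (hNb1 w).1 hadj.symm with rfl | rfl | rfl
            · exact hwv rfl
            · exact hwa1 rfl
            · exact hwq1 rfl
          · rcases (hNa2 w).1 hadj.symm with rfl | rfl | rfl
            · exact hwv rfl
            · exact hwb2 rfl
            · exact hwp2 rfl
          · rcases (hNb2 w).1 hadj.symm with rfl | rfl | rfl
            · exact hwv rfl
            · exact hwa2 rfl
            · exact hwq2 rfl
          · rcases (hNa3 w).1 hadj.symm with rfl | rfl | rfl
            · exact hwv rfl
            · exact hwb3 rfl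
            · exact hwp3 rfl
          · rcases (hNb3 w).1 hadj.symm with rfl | rfl | rfl
            · exact hwv rfl
            · exact hwa3 rfl
            · exact hwq3 rfl
          · rcases (hNaA w).1 hadj.symm with rfl | rfl | rfl
            · exact hwv rfl
            · rw [hga] at hcol
              rcases hα with ⟨h0, hb0⟩ | ⟨_, _, hnb⟩
              · exact hb0 (hcol ▸ h0 ▸ rfl)
              · exact hnb hcol
            · exact hwx rfl
        · exact ⟨hadj, huD, by rw [← hgout u huD]; exact hcol⟩
      exact le_trans (Set.ncard_le_ncard hsub (Set.toFinite _)) (hOk w hwD)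
    -- instantiate the master lemma
    rcases fin3cases (f b) with hb | hb | hb
    · rcases fin3cases (f x) with hx | hx | hx
      · exact master 2 1 (Or.inr rfl) (by rw [hb]; decide) (by decide)
          (Or.inr ⟨by decide, by rw [hx]; decide, by rw [hb]; decide⟩)
      · exact master 1 2 (Or.inl rfl) (by rw [hb]; decide) (by decide)
          (Or.inr ⟨by decide, by rw [hx]; decide, by rw [hb]; decide⟩)
      · exact master 2 1 (Or.inr rfl) (by rw [hb]; decide) (by decide)
          (Or.inr ⟨by decide, by rw [hx]; decide, by rw [hb]; decide⟩)
    · exact master 2 0 (Or.inr rfl) (by rw [hb]; decide) (by decide)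
        (Or.inl ⟨rfl, by rw [hb]; decide⟩)
    · exact master 1 0 (Or.inl rfl) (by rw [hb]; decide) (by decide)
        (Or.inl ⟨rfl, by rw [hb]; decide⟩)
  · -- part (ii)
    rintro ⟨aa, bb, habne, ⟨hvaa, hdaa, x, y, ⟨haax, hxy, haay⟩, hxv, hyv⟩,
      ⟨hvbb, hdbb, x', y', ⟨hbbx', hx'y', hbby'⟩, hx'v, hy'v⟩⟩
    have hNaa : ∀ z, G.Adj aa z ↔ z = v ∨ z = x ∨ z = y :=
      deg3_nbrs3 hdaa hvaa.symm haax haay (Ne.symm hxv) hyv hxy.ne'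
    have hNbb : ∀ z, G.Adj bb z ↔ z = v ∨ z = x' ∨ z = y' :=
      deg3_nbrs3 hdbb hvbb.symm hbbx' hbby' (Ne.symm hx'v) hy'v hx'y'.ne'

    have ka1 : aa ≠ a1 := extraB hG hNaa hxy hxv hyv ht1 hNa1 hNb1 hnvp1 hnvq1 hp1v
    have kb1 : aa ≠ b1 := extraB hG hNaa hxy hxv hyv (tri_swap ht1) hNb1 hNa1 hnvq1 hnvp1 hq1v
    have la1 : bb ≠ a1 := extraB hG hNbb hx'y' hx'v hy'v ht1 hNa1 hNb1 hnvp1 hnvq1 hp1v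
    have lb1 : bb ≠ b1 := extraB hG hNbb hx'y' hx'v hy'v (tri_swap ht1) hNb1 hNa1 hnvq1 hnvp1 hq1v

    have ka2 : aa ≠ a2 := extraB hG hNaa hxy hxv hyv ht2 hNa2 hNb2 hnvp2 hnvq2 hp2v
    have kb2 : aa ≠ b2 := extraB hG hNaa hxy hxv hyv (tri_swap ht2) hNb2 hNa2 hnvq2 hnvp2 hq2v
    have la2 : bb ≠ a2 := extraB hG hNbb hx'y' hx'v hy'v ht2 hNa2 hNb2 hnvp2 hnvq2 hp2v
    have lb2 : bb ≠ b2 := extraB hG hNbb hx'y' hx'v hy'v (tri_swap ht2) hNb2 hNa2 hnvq2 hnvp2 hq2v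

    have ka3 : aa ≠ a3 := extraB hG hNaa hxy hxv hyv ht3 hNa3 hNb3 hnvp3 hnvq3 hp3v
    have kb3 : aa ≠ b3 := extraB hG hNaa hxy hxv hyv (tri_swap ht3) hNb3 hNa3 hnvq3 hnvp3 hq3v
    have la3 : bb ≠ a3 := extraB hG hNbb hx'y' hx'v hy'v ht3 hNa3 hNb3 hnvp3 hnvq3 hp3v
    have lb3 : bb ≠ b3 := extraB hG hNbb hx'y' hx'v hy'v (tri_swap ht3) hNb3 hNa3 hnvq3 hnvp3 hq3v

    have hNv : ∀ z, G.Adj v z ↔ z = a1 ∨ z = b1 ∨ z = a2 ∨ z = b2 ∨ z = a3 ∨ z = b3 ∨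
        z = aa ∨ z = bb :=
      deg8_nbrs hd hva1 hvb1 hva2 hvb2 hva3 hvb3 hvaa hvbb
        ha1b1.ne na1a2 na1b2 na1a3 na1b3 ka1.symm la1.symm
        nb1a2 nb1b2 nb1a3 nb1b3 kb1.symm lb1.symm
        ha2b2.ne na2a3 na2b3 ka2.symm la2.symm
        nb2a3 nb2b3 kb2.symm lb2.symm
        ha3b3.ne ka3.symm la3.symm
        kb3.symm lb3.symm habne

    have hnvx : ¬ G.Adj v x := by
      intro h
      rcases (hNv x).1 h with rfl | rfl | rfl | rfl | rfl | rfl | rfl | rfl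
      · rcases (hNa1 aa).1 haax.symm with rfl | rfl | rfl
        · exact hvaa.ne rfl
        · exact kb1 rfl
        · exact hnvp1 hvaa
      · rcases (hNb1 aa).1 haax.symm with rfl | rfl | rfl
        · exact hvaa.ne rfl
        · exact ka1 rfl
        · exact hnvq1 hvaa
      · rcases (hNa2 aa).1 haax.symm with rfl | rfl | rfl
        · exact hvaa.ne rfl
        · exact kb2 rfl
        · exact hnvp2 hvaa
      · rcases (hNb2 aa).1 haax.symm with rfl | rfl | rfl
        · exact hvaa.ne rfl
        · exact ka2 rfl
        · exact hnvq2 hvaa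
      · rcases (hNa3 aa).1 haax.symm with rfl | rfl | rfl
        · exact hvaa.ne rfl
        · exact kb3 rfl
        · exact hnvp3 hvaa
      · rcases (hNb3 aa).1 haax.symm with rfl | rfl | rfl
        · exact hvaa.ne rfl
        · exact ka3 rfl
        · exact hnvq3 hvaa
      · exact haax.ne rfl
      · exact c4elim hG hvaa haay hxy.symm h.symm (Ne.symm hyv) haax.ne

    have hnvy : ¬ G.Adj v y := by
      intro h
      rcases (hNv y).1 h with rfl | rfl | rfl | rfl | rfl | rfl | rfl | rfl
      · rcases (hNa1 aa).1 haay.symm with rfl | rfl | rfl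
        · exact hvaa.ne rfl
        · exact kb1 rfl
        · exact hnvp1 hvaa
      · rcases (hNb1 aa).1 haay.symm with rfl | rfl | rfl
        · exact hvaa.ne rfl
        · exact ka1 rfl
        · exact hnvq1 hvaa
      · rcases (hNa2 aa).1 haay.symm with rfl | rfl | rfl
        · exact hvaa.ne rfl
        · exact kb2 rfl
        · exact hnvp2 hvaa
      · rcases (hNb2 aa).1 haay.symm with rfl | rfl | rfl
        · exact hvaa.ne rfl
        · exact ka2 rfl
        · exact hnvq2 hvaa
      · rcases (hNa3 aa).1 haay.symm with rfl | rfl | rfl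
        · exact hvaa.ne rfl
        · exact kb3 rfl
        · exact hnvp3 hvaa
      · rcases (hNb3 aa).1 haay.symm with rfl | rfl | rfl
        · exact hvaa.ne rfl
        · exact ka3 rfl
        · exact hnvq3 hvaa
      · exact haay.ne rfl
      · exact c4elim hG hvaa haax hxy h.symm (Ne.symm hxv) haay.ne

    have hnvx' : ¬ G.Adj v x' := by
      intro h
      rcases (hNv x').1 h with rfl | rfl | rfl | rfl | rfl | rfl | rfl | rfl

      · rcases (hNa1 bb).1 hbbx'.symm with rfl | rfl | rfl
        · exact hvbb.ne rfl
        · exact lb1 rfl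
        · exact hnvp1 hvbb
      · rcases (hNb1 bb).1 hbbx'.symm with rfl | rfl | rfl
        · exact hvbb.ne rfl
        · exact la1 rfl
        · exact hnvq1 hvbb

      · rcases (hNa2 bb).1 hbbx'.symm with rfl | rfl | rfl
        · exact hvbb.ne rfl
        · exact lb2 rfl
        · exact hnvp2 hvbb
      · rcases (hNb2 bb).1 hbbx'.symm with rfl | rfl | rfl
        · exact hvbb.ne rfl
        · exact la2 rfl
        · exact hnvq2 hvbb

      · rcases (hNa3 bb).1 hbbx'.symm with rfl | rfl | rfl
        · exact hvbb.ne rfl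
        · exact lb3 rfl
        · exact hnvp3 hvbb
      · rcases (hNb3 bb).1 hbbx'.symm with rfl | rfl | rfl
        · exact hvbb.ne rfl
        · exact la3 rfl
        · exact hnvq3 hvbb

      · rcases (hNaa bb).1 hbbx'.symm with rfl | rfl | rfl
        · exact hvbb.ne rfl
        · exact hnvx hvbb
        · exact hnvy hvbb
      · exact hbbx'.ne rfl

    have hnvy' : ¬ G.Adj v y' := by
      intro h
      rcases (hNv y').1 h with rfl | rfl | rfl | rfl | rfl | rfl | rfl | rfl

      · rcases (hNa1 bb).1 hbby'.symm with rfl | rfl | rfl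
        · exact hvbb.ne rfl
        · exact lb1 rfl
        · exact hnvp1 hvbb
      · rcases (hNb1 bb).1 hbby'.symm with rfl | rfl | rfl
        · exact hvbb.ne rfl
        · exact la1 rfl
        · exact hnvq1 hvbb

      · rcases (hNa2 bb).1 hbby'.symm with rfl | rfl | rfl
        · exact hvbb.ne rfl
        · exact lb2 rfl
        · exact hnvp2 hvbb
      · rcases (hNb2 bb).1 hbby'.symm with rfl | rfl | rfl
        · exact hvbb.ne rfl
        · exact la2 rfl
        · exact hnvq2 hvbb

      · rcases (hNa3 bb).1 hbby'.symm with rfl | rfl | rfl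
        · exact hvbb.ne rfl
        · exact lb3 rfl
        · exact hnvp3 hvbb
      · rcases (hNb3 bb).1 hbby'.symm with rfl | rfl | rfl
        · exact hvbb.ne rfl
        · exact la3 rfl
        · exact hnvq3 hvbb

      · rcases (hNaa bb).1 hbby'.symm with rfl | rfl | rfl
        · exact hvbb.ne rfl
        · exact hnvx hvbb
        · exact hnvy hvbb
      · exact hbby'.ne rfl

    set D : Set V := {v, a1, b1, a2, b2, a3, b3, aa, bb} with hD
    have hmemD : ∀ u, u ∈ D ↔ u = v ∨ u = a1 ∨ u = b1 ∨ u = a2 ∨ u = b2 ∨ u = a3 ∨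
        u = b3 ∨ u = aa ∨ u = bb := by
      intro u; simp [hD]
    have hvD : v ∈ D := (hmemD v).2 (Or.inl rfl)
    have ha1D : a1 ∈ D := (hmemD a1).2 (Or.inr (Or.inl rfl))
    have hb1D : b1 ∈ D := (hmemD b1).2 (Or.inr (Or.inr (Or.inl rfl)))
    have ha2D : a2 ∈ D := (hmemD a2).2 (Or.inr (Or.inr (Or.inr (Or.inl rfl))))
    have hb2D : b2 ∈ D := (hmemD b2).2 (Or.inr (Or.inr (Or.inr (Or.inr (Or.inl rfl)))))
    have ha3D : a3 ∈ D := (hmemD a3).2 (Or.inr (Or.inr (Or.inr (Or.inr (Or.inr (Or.inl rfl))))))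
    have hb3D : b3 ∈ D := (hmemD b3).2 (Or.inr (Or.inr (Or.inr (Or.inr (Or.inr (Or.inr (Or.inl rfl)))))))
    have haaD : aa ∈ D := (hmemD aa).2 (Or.inr (Or.inr (Or.inr (Or.inr (Or.inr (Or.inr (Or.inr (Or.inl rfl))))))))
    have hbbD : bb ∈ D := (hmemD bb).2 (Or.inr (Or.inr (Or.inr (Or.inr (Or.inr (Or.inr (Or.inr (Or.inr rfl))))))))
    have hDchar : ∀ u ∈ D, u = v ∨ G.Adj v u := by
      intro u hu
      rcases (hmemD u).1 hu with rfl | rfl | rfl | rfl | rfl | rfl | rfl | rfl | rfl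
      · exact Or.inl rfl
      all_goals exact Or.inr (by assumption)
    have hnotD : ∀ pp, pp ≠ v → ¬ G.Adj v pp → pp ∉ D := by
      intro pp h1 h2 hm
      rcases hDchar pp hm with rfl | h
      · exact h1 rfl
      · exact h2 h
    have hp1D : p1 ∉ D := hnotD p1 hp1v hnvp1
    have hq1D : q1 ∉ D := hnotD q1 hq1v hnvq1
    have hp2D : p2 ∉ D := hnotD p2 hp2v hnvp2
    have hq2D : q2 ∉ D := hnotD q2 hq2v hnvq2
    have hp3D : p3 ∉ D := hnotD p3 hp3v hnvp3
    have hq3D : q3 ∉ D := hnotD q3 hq3v hnvq3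
    have hxD : x ∉ D := hnotD x hxv hnvx
    have hyD : y ∉ D := hnotD y hyv hnvy
    have hx'D : x' ∉ D := hnotD x' hx'v hnvx'
    have hy'D : y' ∉ D := hnotD y' hy'v hnvy'
    obtain ⟨f0, hf0⟩ := exists_del_coloring hmin D ⟨v, hvD⟩
    set P : Finset V := {p1, q1, p2, q2, p3, q3} with hPdef
    have hPbound : ∀ p ∈ P, ({u | G.Adj p u ∧ u ∉ D}).ncard ≤ 4 := by
      intro p hp
      simp only [hPdef, Finset.mem_insert, Finset.mem_singleton] at hp
      rcases hp with rfl | rfl | rfl | rfl | rfl | rfl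
      · exact out_nbrs_le4 hdp1 ha1p1.symm ha1D
      · exact out_nbrs_le4 hdq1 hb1q1.symm hb1D
      · exact out_nbrs_le4 hdp2 ha2p2.symm ha2D
      · exact out_nbrs_le4 hdq2 hb2q2.symm hb2D
      · exact out_nbrs_le4 hdp3 ha3p3.symm ha3D
      · exact out_nbrs_le4 hdq3 hb3q3.symm hb3D
    obtain ⟨f, hOk, hSlack⟩ := fix_pendants hPbound hf0

    have hDadjp1 : ∀ u, G.Adj p1 u → u ∈ D → u = a1 := by
      intro u hadj hu
      rcases (hmemD u).1 hu with rfl | rfl | rfl | rfl | rfl | rfl | rfl | rfl | rfl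
      · exact absurd hadj.symm hnvp1
      · rfl
      · exact absurd (common_nbr hG hva1 hvb1 ha1b1.ne ha1p1.symm hadj) hp1v
      · exact absurd (common_nbr hG hva1 hva2 na1a2 ha1p1.symm hadj) hp1v
      · exact absurd (common_nbr hG hva1 hvb2 na1b2 ha1p1.symm hadj) hp1v
      · exact absurd (common_nbr hG hva1 hva3 na1a3 ha1p1.symm hadj) hp1v
      · exact absurd (common_nbr hG hva1 hvb3 na1b3 ha1p1.symm hadj) hp1v
      · exact absurd (common_nbr hG hva1 hvaa ka1.symm ha1p1.symm hadj) hp1v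
      · exact absurd (common_nbr hG hva1 hvbb la1.symm ha1p1.symm hadj) hp1v

    have hDadjq1 : ∀ u, G.Adj q1 u → u ∈ D → u = b1 := by
      intro u hadj hu
      rcases (hmemD u).1 hu with rfl | rfl | rfl | rfl | rfl | rfl | rfl | rfl | rfl
      · exact absurd hadj.symm hnvq1
      · exact absurd (common_nbr hG hvb1 hva1 ha1b1.ne.symm hb1q1.symm hadj) hq1v
      · rfl
      · exact absurd (common_nbr hG hvb1 hva2 nb1a2 hb1q1.symm hadj) hq1v
      · exact absurd (common_nbr hG hvb1 hvb2 nb1b2 hb1q1.symm hadj) hq1v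
      · exact absurd (common_nbr hG hvb1 hva3 nb1a3 hb1q1.symm hadj) hq1v
      · exact absurd (common_nbr hG hvb1 hvb3 nb1b3 hb1q1.symm hadj) hq1v
      · exact absurd (common_nbr hG hvb1 hvaa kb1.symm hb1q1.symm hadj) hq1v
      · exact absurd (common_nbr hG hvb1 hvbb lb1.symm hb1q1.symm hadj) hq1v

    have hDadjp2 : ∀ u, G.Adj p2 u → u ∈ D → u = a2 := by
      intro u hadj hu
      rcases (hmemD u).1 hu with rfl | rfl | rfl | rfl | rfl | rfl | rfl | rfl | rfl
      · exact absurd hadj.symm hnvp2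
      · exact absurd (common_nbr hG hva2 hva1 na1a2.symm ha2p2.symm hadj) hp2v
      · exact absurd (common_nbr hG hva2 hvb1 nb1a2.symm ha2p2.symm hadj) hp2v
      · rfl
      · exact absurd (common_nbr hG hva2 hvb2 ha2b2.ne ha2p2.symm hadj) hp2v
      · exact absurd (common_nbr hG hva2 hva3 na2a3 ha2p2.symm hadj) hp2v
      · exact absurd (common_nbr hG hva2 hvb3 na2b3 ha2p2.symm hadj) hp2v
      · exact absurd (common_nbr hG hva2 hvaa ka2.symm ha2p2.symm hadj) hp2v
      · exact absurd (common_nbr hG hva2 hvbb la2.symm ha2p2.symm hadj) hp2v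

    have hDadjq2 : ∀ u, G.Adj q2 u → u ∈ D → u = b2 := by
      intro u hadj hu
      rcases (hmemD u).1 hu with rfl | rfl | rfl | rfl | rfl | rfl | rfl | rfl | rfl
      · exact absurd hadj.symm hnvq2
      · exact absurd (common_nbr hG hvb2 hva1 na1b2.symm hb2q2.symm hadj) hq2v
      · exact absurd (common_nbr hG hvb2 hvb1 nb1b2.symm hb2q2.symm hadj) hq2v
      · exact absurd (common_nbr hG hvb2 hva2 ha2b2.ne.symm hb2q2.symm hadj) hq2v
      · rfl
      · exact absurd (common_nbr hG hvb2 hva3 nb2a3 hb2q2.symm hadj) hq2v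
      · exact absurd (common_nbr hG hvb2 hvb3 nb2b3 hb2q2.symm hadj) hq2v
      · exact absurd (common_nbr hG hvb2 hvaa kb2.symm hb2q2.symm hadj) hq2v
      · exact absurd (common_nbr hG hvb2 hvbb lb2.symm hb2q2.symm hadj) hq2v

    have hDadjp3 : ∀ u, G.Adj p3 u → u ∈ D → u = a3 := by
      intro u hadj hu
      rcases (hmemD u).1 hu with rfl | rfl | rfl | rfl | rfl | rfl | rfl | rfl | rfl
      · exact absurd hadj.symm hnvp3
      · exact absurd (common_nbr hG hva3 hva1 na1a3.symm ha3p3.symm hadj) hp3v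
      · exact absurd (common_nbr hG hva3 hvb1 nb1a3.symm ha3p3.symm hadj) hp3v
      · exact absurd (common_nbr hG hva3 hva2 na2a3.symm ha3p3.symm hadj) hp3v
      · exact absurd (common_nbr hG hva3 hvb2 nb2a3.symm ha3p3.symm hadj) hp3v
      · rfl
      · exact absurd (common_nbr hG hva3 hvb3 ha3b3.ne ha3p3.symm hadj) hp3v
      · exact absurd (common_nbr hG hva3 hvaa ka3.symm ha3p3.symm hadj) hp3v
      · exact absurd (common_nbr hG hva3 hvbb la3.symm ha3p3.symm hadj) hp3v

    have hDadjq3 : ∀ u, G.Adj q3 u → u ∈ D → u = b3 := by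
      intro u hadj hu
      rcases (hmemD u).1 hu with rfl | rfl | rfl | rfl | rfl | rfl | rfl | rfl | rfl
      · exact absurd hadj.symm hnvq3
      · exact absurd (common_nbr hG hvb3 hva1 na1b3.symm hb3q3.symm hadj) hq3v
      · exact absurd (common_nbr hG hvb3 hvb1 nb1b3.symm hb3q3.symm hadj) hq3v
      · exact absurd (common_nbr hG hvb3 hva2 na2b3.symm hb3q3.symm hadj) hq3v
      · exact absurd (common_nbr hG hvb3 hvb2 nb2b3.symm hb3q3.symm hadj) hq3v
      · exact absurd (common_nbr hG hvb3 hva3 ha3b3.ne.symm hb3q3.symm hadj) hq3v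
      · rfl
      · exact absurd (common_nbr hG hvb3 hvaa kb3.symm hb3q3.symm hadj) hq3v
      · exact absurd (common_nbr hG hvb3 hvbb lb3.symm hb3q3.symm hadj) hq3v

    have hDadjx : ∀ u, G.Adj x u → u ∈ D → u = aa := by
      intro u hadj hu
      rcases (hmemD u).1 hu with rfl | rfl | rfl | rfl | rfl | rfl | rfl | rfl | rfl
      · exact absurd hadj.symm hnvx
      · exact absurd (common_nbr hG hvaa hva1 ka1 haax.symm hadj) hxv
      · exact absurd (common_nbr hG hvaa hvb1 kb1 haax.symm hadj) hxv
      · exact absurd (common_nbr hG hvaa hva2 ka2 haax.symm hadj) hxv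
      · exact absurd (common_nbr hG hvaa hvb2 kb2 haax.symm hadj) hxv
      · exact absurd (common_nbr hG hvaa hva3 ka3 haax.symm hadj) hxv
      · exact absurd (common_nbr hG hvaa hvb3 kb3 haax.symm hadj) hxv
      · rfl
      · exact absurd (common_nbr hG hvaa hvbb habne haax.symm hadj) hxv

    have hDadjy : ∀ u, G.Adj y u → u ∈ D → u = aa := by
      intro u hadj hu
      rcases (hmemD u).1 hu with rfl | rfl | rfl | rfl | rfl | rfl | rfl | rfl | rfl
      · exact absurd hadj.symm hnvy
      · exact absurd (common_nbr hG hvaa hva1 ka1 haay.symm hadj) hyv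
      · exact absurd (common_nbr hG hvaa hvb1 kb1 haay.symm hadj) hyv
      · exact absurd (common_nbr hG hvaa hva2 ka2 haay.symm hadj) hyv
      · exact absurd (common_nbr hG hvaa hvb2 kb2 haay.symm hadj) hyv
      · exact absurd (common_nbr hG hvaa hva3 ka3 haay.symm hadj) hyv
      · exact absurd (common_nbr hG hvaa hvb3 kb3 haay.symm hadj) hyv
      · rfl
      · exact absurd (common_nbr hG hvaa hvbb habne haay.symm hadj) hyv

    have hDadjx' : ∀ u, G.Adj x' u → u ∈ D → u = bb := by
      intro u hadj hu
      rcases (hmemD u).1 hu with rfl | rfl | rfl | rfl | rfl | rfl | rfl | rfl | rfl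
      · exact absurd hadj.symm hnvx'
      · exact absurd (common_nbr hG hvbb hva1 la1 hbbx'.symm hadj) hx'v
      · exact absurd (common_nbr hG hvbb hvb1 lb1 hbbx'.symm hadj) hx'v
      · exact absurd (common_nbr hG hvbb hva2 la2 hbbx'.symm hadj) hx'v
      · exact absurd (common_nbr hG hvbb hvb2 lb2 hbbx'.symm hadj) hx'v
      · exact absurd (common_nbr hG hvbb hva3 la3 hbbx'.symm hadj) hx'v
      · exact absurd (common_nbr hG hvbb hvb3 lb3 hbbx'.symm hadj) hx'v
      · exact absurd (common_nbr hG hvbb hvaa habne.symm hbbx'.symm hadj) hx'v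
      · rfl

    have hDadjy' : ∀ u, G.Adj y' u → u ∈ D → u = bb := by
      intro u hadj hu
      rcases (hmemD u).1 hu with rfl | rfl | rfl | rfl | rfl | rfl | rfl | rfl | rfl
      · exact absurd hadj.symm hnvy'
      · exact absurd (common_nbr hG hvbb hva1 la1 hbby'.symm hadj) hy'v
      · exact absurd (common_nbr hG hvbb hvb1 lb1 hbby'.symm hadj) hy'v
      · exact absurd (common_nbr hG hvbb hva2 la2 hbby'.symm hadj) hy'v
      · exact absurd (common_nbr hG hvbb hvb2 lb2 hbby'.symm hadj) hy'v
      · exact absurd (common_nbr hG hvbb hva3 la3 hbby'.symm hadj) hy'v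
      · exact absurd (common_nbr hG hvbb hvb3 lb3 hbby'.symm hadj) hy'v
      · exact absurd (common_nbr hG hvbb hvaa habne.symm hbby'.symm hadj) hy'v
      · rfl

    have master2 : ∀ γ α β α1 β1 α2 β2 α3 β3 : Fin 3,
        (γ ≠ 0 → α ≠ γ ∧ β ≠ γ ∧ α1 ≠ γ ∧ β1 ≠ γ ∧ α2 ≠ γ ∧ β2 ≠ γ ∧ α3 ≠ γ ∧ β3 ≠ γ) →
        (γ = 0 → α ≠ 0 ∧ β ≠ 0 ∧ α1 ≠ 0 ∧ α2 ≠ 0 ∧ α3 ≠ 0) →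
        ((α = 0 ∧ f x ≠ 0 ∧ f y ≠ 0) ∨ (α ≠ 0 ∧ α ≠ f x ∧ α ≠ f y)) →
        ((β = 0 ∧ f x' ≠ 0 ∧ f y' ≠ 0) ∨ (β ≠ 0 ∧ β ≠ f x' ∧ β ≠ f y')) →
        ((α1 ≠ 0 → α1 ≠ f p1 ∧ α1 ≠ β1) ∧ (β1 ≠ 0 → β1 ≠ f q1 ∧ β1 ≠ α1)) →
        ((α2 ≠ 0 → α2 ≠ f p2 ∧ α2 ≠ β2) ∧ (β2 ≠ 0 → β2 ≠ f q2 ∧ β2 ≠ α2)) →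
        ((α3 ≠ 0 → α3 ≠ f p3 ∧ α3 ≠ β3) ∧ (β3 ≠ 0 → β3 ≠ f q3 ∧ β3 ≠ α3)) → False := by
      intro γ α β α1 β1 α2 β2 α3 β3 Hγ Hγ0 Hα Hβ HC1 HC2 HC3
      set g : V → Fin 3 := fun u => if u = v then γ else if u = aa then α else
        if u = bb then β else if u = a1 then α1 else if u = b1 then β1 else
        if u = a2 then α2 else if u = b2 then β2 else if u = a3 then α3 else
        if u = b3 then β3 else f u with hg
      have hgv : g v = γ := by rw [hg]; simp
      have hgaa : g aa = α := by rw [hg]; simp [hvaa.ne']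
      have hgbb : g bb = β := by rw [hg]; simp [hvbb.ne', habne.symm]
      have hga1 : g a1 = α1 := by rw [hg]; simp [hva1.ne', ka1.symm, la1.symm]
      have hgb1 : g b1 = β1 := by rw [hg]; simp [hvb1.ne', kb1.symm, lb1.symm, ha1b1.ne']
      have hga2 : g a2 = α2 := by
        rw [hg]; simp [hva2.ne', ka2.symm, la2.symm, na1a2.symm, nb1a2.symm]
      have hgb2 : g b2 = β2 := by
        rw [hg]; simp [hvb2.ne', kb2.symm, lb2.symm, na1b2.symm, nb1b2.symm, ha2b2.ne']
      have hga3 : g a3 = α3 := by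
        rw [hg]
        simp [hva3.ne', ka3.symm, la3.symm, na1a3.symm, nb1a3.symm, na2a3.symm, nb2a3.symm]
      have hgb3 : g b3 = β3 := by
        rw [hg]
        simp [hvb3.ne', kb3.symm, lb3.symm, na1b3.symm, nb1b3.symm, na2b3.symm, nb2b3.symm,
          ha3b3.ne']
      have hgout : ∀ u, u ∉ D → g u = f u := by
        intro u hu
        rw [hg]
        have h1 : ¬ (u = v) := fun h => hu ((hmemD u).2 (Or.inl h))
        have h2 : ¬ (u = a1) := fun h => hu ((hmemD u).2 (Or.inr (Or.inl h)))
        have h3 : ¬ (u = b1) := fun h => hu ((hmemD u).2 (Or.inr (Or.inr (Or.inl h))))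
        have h4 : ¬ (u = a2) := fun h => hu ((hmemD u).2 (Or.inr (Or.inr (Or.inr (Or.inl h)))))
        have h5 : ¬ (u = b2) := fun h => hu ((hmemD u).2 (Or.inr (Or.inr (Or.inr (Or.inr (Or.inl h))))))
        have h6 : ¬ (u = a3) := fun h => hu ((hmemD u).2 (Or.inr (Or.inr (Or.inr (Or.inr (Or.inr (Or.inl h)))))))
        have h7 : ¬ (u = b3) := fun h => hu ((hmemD u).2 (Or.inr (Or.inr (Or.inr (Or.inr (Or.inr (Or.inr (Or.inl h))))))))
        have h8 : ¬ (u = aa) := fun h => hu ((hmemD u).2 (Or.inr (Or.inr (Or.inr (Or.inr (Or.inr (Or.inr (Or.inr (Or.inl h)))))))))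
        have h9 : ¬ (u = bb) := fun h => hu ((hmemD u).2 (Or.inr (Or.inr (Or.inr (Or.inr (Or.inr (Or.inr (Or.inr (Or.inr (h))))))))))
        simp [h1, h2, h3, h4, h5, h6, h7, h8, h9]
      apply hmin.1
      refine ⟨g, fun w => ?_⟩
      by_cases hwv : w = v
      · subst hwv
        rw [hgv]
        by_cases hγ0 : γ = 0
        · rw [hγ0, hcap0]
          obtain ⟨m1, m2, m3, m4, m5⟩ := Hγ0 hγ0
          have hsub : {u | G.Adj w u ∧ g u = 0} ⊆ {b1, b2, b3} := by
            rintro u ⟨hadj, hcol⟩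
            rcases (hNv u).1 hadj with rfl | rfl | rfl | rfl | rfl | rfl | rfl | rfl
            · rw [hga1] at hcol; exact absurd hcol m3
            · exact Or.inl rfl
            · rw [hga2] at hcol; exact absurd hcol m4
            · exact Or.inr (Or.inl rfl)
            · rw [hga3] at hcol; exact absurd hcol m5
            · exact Or.inr (Or.inr rfl)
            · rw [hgaa] at hcol; exact absurd hcol m1
            · rw [hgbb] at hcol; exact absurd hcol m2
          have := ncard_le_three' hsub
          omega
        · obtain ⟨m1, m2, m3, m4, m5, m6, m7, m8⟩ := Hγ hγ0
          rw [hcapn γ hγ0]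
          have he : {u | G.Adj w u ∧ g u = γ} = ∅ := by
            rw [Set.eq_empty_iff_forall_notMem]
            rintro u ⟨hadj, hcol⟩
            rcases (hNv u).1 hadj with rfl | rfl | rfl | rfl | rfl | rfl | rfl | rfl
            · rw [hga1] at hcol; exact m3 hcol
            · rw [hgb1] at hcol; exact m4 hcol
            · rw [hga2] at hcol; exact m5 hcol
            · rw [hgb2] at hcol; exact m6 hcol
            · rw [hga3] at hcol; exact m7 hcol
            · rw [hgb3] at hcol; exact m8 hcol
            · rw [hgaa] at hcol; exact m1 hcol
            · rw [hgbb] at hcol; exact m2 hcol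
          rw [he, Set.ncard_empty]

      by_cases hwaa : w = aa
      · subst hwaa
        rw [hgaa]
        rcases Hα with ⟨h0, hx0, hy0⟩ | ⟨hn0, hnx, hny⟩
        · rw [h0, hcap0]
          have hsub : {u | G.Adj w u ∧ g u = 0} ⊆ {v, x, y} := by
            rintro u ⟨hadj, _⟩
            rcases (hNaa u).1 hadj with rfl | rfl | rfl
            · exact Or.inl rfl
            · exact Or.inr (Or.inl rfl)
            · exact Or.inr (Or.inr rfl)
          have := ncard_le_three' hsub
          omega
        · rw [hcapn α hn0]
          have hγc : γ ≠ α := by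
            by_cases hγ0 : γ = 0
            · rw [hγ0]; exact fun h => hn0 h.symm
            · exact Ne.symm (Hγ hγ0).1
          have he : {u | G.Adj w u ∧ g u = α} = ∅ := by
            rw [Set.eq_empty_iff_forall_notMem]
            rintro u ⟨hadj, hcol⟩
            rcases (hNaa u).1 hadj with rfl | rfl | rfl
            · rw [hgv] at hcol; exact hγc hcol
            · rw [hgout _ hxD] at hcol; exact hnx hcol.symm
            · rw [hgout _ hyD] at hcol; exact hny hcol.symm
          rw [he, Set.ncard_empty]

      by_cases hwbb : w = bb
      · subst hwbb
        rw [hgbb]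
        rcases Hβ with ⟨h0, hx0, hy0⟩ | ⟨hn0, hnx, hny⟩
        · rw [h0, hcap0]
          have hsub : {u | G.Adj w u ∧ g u = 0} ⊆ {v, x', y'} := by
            rintro u ⟨hadj, _⟩
            rcases (hNbb u).1 hadj with rfl | rfl | rfl
            · exact Or.inl rfl
            · exact Or.inr (Or.inl rfl)
            · exact Or.inr (Or.inr rfl)
          have := ncard_le_three' hsub
          omega
        · rw [hcapn β hn0]
          have hγc : γ ≠ β := by
            by_cases hγ0 : γ = 0
            · rw [hγ0]; exact fun h => hn0 h.symm
            · exact Ne.symm (Hγ hγ0).2.1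
          have he : {u | G.Adj w u ∧ g u = β} = ∅ := by
            rw [Set.eq_empty_iff_forall_notMem]
            rintro u ⟨hadj, hcol⟩
            rcases (hNbb u).1 hadj with rfl | rfl | rfl
            · rw [hgv] at hcol; exact hγc hcol
            · rw [hgout _ hx'D] at hcol; exact hnx hcol.symm
            · rw [hgout _ hy'D] at hcol; exact hny hcol.symm
          rw [he, Set.ncard_empty]

      by_cases hwa1 : w = a1
      · subst hwa1
        rw [hga1]
        by_cases h0 : α1 = 0
        · rw [h0, hcap0]
          have hsub : {u | G.Adj w u ∧ g u = 0} ⊆ {v, b1, p1} := by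
            rintro u ⟨hadj, _⟩
            rcases (hNa1 u).1 hadj with rfl | rfl | rfl
            · exact Or.inl rfl
            · exact Or.inr (Or.inl rfl)
            · exact Or.inr (Or.inr rfl)
          have := ncard_le_three' hsub
          omega
        · rw [hcapn α1 h0]
          have hγc : γ ≠ α1 := by
            by_cases hγ0 : γ = 0
            · rw [hγ0]; exact fun h => h0 h.symm
            · exact Ne.symm (Hγ hγ0).2.2.1
          have he : {u | G.Adj w u ∧ g u = α1} = ∅ := by
            rw [Set.eq_empty_iff_forall_notMem]
            rintro u ⟨hadj, hcol⟩
            rcases (hNa1 u).1 hadj with rfl | rfl | rfl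
            · rw [hgv] at hcol; exact hγc hcol
            · rw [hgb1] at hcol; exact (HC1.1 h0).2 hcol.symm
            · rw [hgout _ hp1D] at hcol; exact (HC1.1 h0).1 hcol.symm
          rw [he, Set.ncard_empty]

      by_cases hwb1 : w = b1
      · subst hwb1
        rw [hgb1]
        by_cases h0 : β1 = 0
        · rw [h0, hcap0]
          have hsub : {u | G.Adj w u ∧ g u = 0} ⊆ {v, a1, q1} := by
            rintro u ⟨hadj, _⟩
            rcases (hNb1 u).1 hadj with rfl | rfl | rfl
            · exact Or.inl rfl
            · exact Or.inr (Or.inl rfl)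
            · exact Or.inr (Or.inr rfl)
          have := ncard_le_three' hsub
          omega
        · rw [hcapn β1 h0]
          have hγc : γ ≠ β1 := by
            by_cases hγ0 : γ = 0
            · rw [hγ0]; exact fun h => h0 h.symm
            · exact Ne.symm (Hγ hγ0).2.2.2.1
          have he : {u | G.Adj w u ∧ g u = β1} = ∅ := by
            rw [Set.eq_empty_iff_forall_notMem]
            rintro u ⟨hadj, hcol⟩
            rcases (hNb1 u).1 hadj with rfl | rfl | rfl
            · rw [hgv] at hcol; exact hγc hcol
            · rw [hga1] at hcol; exact (HC1.2 h0).2 hcol.symm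
            · rw [hgout _ hq1D] at hcol; exact (HC1.2 h0).1 hcol.symm
          rw [he, Set.ncard_empty]

      by_cases hwa2 : w = a2
      · subst hwa2
        rw [hga2]
        by_cases h0 : α2 = 0
        · rw [h0, hcap0]
          have hsub : {u | G.Adj w u ∧ g u = 0} ⊆ {v, b2, p2} := by
            rintro u ⟨hadj, _⟩
            rcases (hNa2 u).1 hadj with rfl | rfl | rfl
            · exact Or.inl rfl
            · exact Or.inr (Or.inl rfl)
            · exact Or.inr (Or.inr rfl)
          have := ncard_le_three' hsub
          omega
        · rw [hcapn α2 h0]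
          have hγc : γ ≠ α2 := by
            by_cases hγ0 : γ = 0
            · rw [hγ0]; exact fun h => h0 h.symm
            · exact Ne.symm (Hγ hγ0).2.2.2.2.1
          have he : {u | G.Adj w u ∧ g u = α2} = ∅ := by
            rw [Set.eq_empty_iff_forall_notMem]
            rintro u ⟨hadj, hcol⟩
            rcases (hNa2 u).1 hadj with rfl | rfl | rfl
            · rw [hgv] at hcol; exact hγc hcol
            · rw [hgb2] at hcol; exact (HC2.1 h0).2 hcol.symm
            · rw [hgout _ hp2D] at hcol; exact (HC2.1 h0).1 hcol.symm
          rw [he, Set.ncard_empty]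

      by_cases hwb2 : w = b2
      · subst hwb2
        rw [hgb2]
        by_cases h0 : β2 = 0
        · rw [h0, hcap0]
          have hsub : {u | G.Adj w u ∧ g u = 0} ⊆ {v, a2, q2} := by
            rintro u ⟨hadj, _⟩
            rcases (hNb2 u).1 hadj with rfl | rfl | rfl
            · exact Or.inl rfl
            · exact Or.inr (Or.inl rfl)
            · exact Or.inr (Or.inr rfl)
          have := ncard_le_three' hsub
          omega
        · rw [hcapn β2 h0]
          have hγc : γ ≠ β2 := by
            by_cases hγ0 : γ = 0
            · rw [hγ0]; exact fun h => h0 h.symm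
            · exact Ne.symm (Hγ hγ0).2.2.2.2.2.1
          have he : {u | G.Adj w u ∧ g u = β2} = ∅ := by
            rw [Set.eq_empty_iff_forall_notMem]
            rintro u ⟨hadj, hcol⟩
            rcases (hNb2 u).1 hadj with rfl | rfl | rfl
            · rw [hgv] at hcol; exact hγc hcol
            · rw [hga2] at hcol; exact (HC2.2 h0).2 hcol.symm
            · rw [hgout _ hq2D] at hcol; exact (HC2.2 h0).1 hcol.symm
          rw [he, Set.ncard_empty]

      by_cases hwa3 : w = a3
      · subst hwa3
        rw [hga3]
        by_cases h0 : α3 = 0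
        · rw [h0, hcap0]
          have hsub : {u | G.Adj w u ∧ g u = 0} ⊆ {v, b3, p3} := by
            rintro u ⟨hadj, _⟩
            rcases (hNa3 u).1 hadj with rfl | rfl | rfl
            · exact Or.inl rfl
            · exact Or.inr (Or.inl rfl)
            · exact Or.inr (Or.inr rfl)
          have := ncard_le_three' hsub
          omega
        · rw [hcapn α3 h0]
          have hγc : γ ≠ α3 := by
            by_cases hγ0 : γ = 0
            · rw [hγ0]; exact fun h => h0 h.symm
            · exact Ne.symm (Hγ hγ0).2.2.2.2.2.2.1
          have he : {u | G.Adj w u ∧ g u = α3} = ∅ := by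
            rw [Set.eq_empty_iff_forall_notMem]
            rintro u ⟨hadj, hcol⟩
            rcases (hNa3 u).1 hadj with rfl | rfl | rfl
            · rw [hgv] at hcol; exact hγc hcol
            · rw [hgb3] at hcol; exact (HC3.1 h0).2 hcol.symm
            · rw [hgout _ hp3D] at hcol; exact (HC3.1 h0).1 hcol.symm
          rw [he, Set.ncard_empty]

      by_cases hwb3 : w = b3
      · subst hwb3
        rw [hgb3]
        by_cases h0 : β3 = 0
        · rw [h0, hcap0]
          have hsub : {u | G.Adj w u ∧ g u = 0} ⊆ {v, a3, q3} := by
            rintro u ⟨hadj, _⟩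
            rcases (hNb3 u).1 hadj with rfl | rfl | rfl
            · exact Or.inl rfl
            · exact Or.inr (Or.inl rfl)
            · exact Or.inr (Or.inr rfl)
          have := ncard_le_three' hsub
          omega
        · rw [hcapn β3 h0]
          have hγc : γ ≠ β3 := by
            by_cases hγ0 : γ = 0
            · rw [hγ0]; exact fun h => h0 h.symm
            · exact Ne.symm (Hγ hγ0).2.2.2.2.2.2.2
          have he : {u | G.Adj w u ∧ g u = β3} = ∅ := by
            rw [Set.eq_empty_iff_forall_notMem]
            rintro u ⟨hadj, hcol⟩
            rcases (hNb3 u).1 hadj with rfl | rfl | rfl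
            · rw [hgv] at hcol; exact hγc hcol
            · rw [hga3] at hcol; exact (HC3.2 h0).2 hcol.symm
            · rw [hgout _ hq3D] at hcol; exact (HC3.2 h0).1 hcol.symm
          rw [he, Set.ncard_empty]

      have hwD : w ∉ D := by
        intro hm
        rcases (hmemD w).1 hm with rfl | rfl | rfl | rfl | rfl | rfl | rfl | rfl | rfl
        · exact hwv rfl
        · exact hwa1 rfl
        · exact hwb1 rfl
        · exact hwa2 rfl
        · exact hwb2 rfl
        · exact hwa3 rfl
        · exact hwb3 rfl
        · exact hwaa rfl
        · exact hwbb rfl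
      have hgw : g w = f w := hgout w hwD
      rw [hgw]
      have key_pend : ∀ t : V, w ∈ P → (∀ u, G.Adj w u → u ∈ D → u = t) →
          (g t = f w → f w = 0) →
          {u | G.Adj w u ∧ g u = f w}.ncard ≤ (![3,0,0] : Fin 3 → ℕ) (f w) := by
        intro t hwP hDt htcol
        by_cases hw0 : f w = 0
        · rw [hw0, hcap0]
          have hsub : {u | G.Adj w u ∧ g u = 0} ⊆
              {u | G.Adj w u ∧ u ∉ D ∧ f u = 0} ∪ {t} := by
            rintro u ⟨hadj, hcol⟩
            by_cases huD : u ∈ D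
            · exact Or.inr (hDt u hadj huD)
            · exact Or.inl ⟨hadj, huD, by rw [← hgout u huD]; exact hcol⟩
          have h1 := ncard_union_singleton_le hsub
          have h2 := hSlack w hwP hw0
          omega
        · rw [hcapn (f w) hw0]
          have he : {u | G.Adj w u ∧ g u = f w} = ∅ := by
            rw [Set.eq_empty_iff_forall_notMem]
            rintro u ⟨hadj, hcol⟩
            by_cases huD : u ∈ D
            · have := hDt u hadj huD; subst this
              exact hw0 (htcol hcol)
            · have : f u = f w := by rw [← hgout u huD]; exact hcol
              have hne := hOk w hwD
              rw [hcapn (f w) hw0] at hne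
              have hmem : u ∈ {u | G.Adj w u ∧ u ∉ D ∧ f u = f w} := ⟨hadj, huD, this⟩
              have := Set.ncard_eq_zero (Set.toFinite _) |>.mp (Nat.le_zero.1 hne)
              rw [this] at hmem
              exact hmem
          rw [he, Set.ncard_empty]

      by_cases hwp1 : w = p1
      · subst hwp1
        exact key_pend a1 (by simp [hPdef]) hDadjp1 (fun h => by
          rw [hga1] at h
          by_cases h0 : α1 = 0
          · rw [h0] at h; exact h.symm
          · exact absurd h ((HC1.1 h0).1))

      by_cases hwq1 : w = q1
      · subst hwq1
        exact key_pend b1 (by simp [hPdef]) hDadjq1 (fun h => by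
          rw [hgb1] at h
          by_cases h0 : β1 = 0
          · rw [h0] at h; exact h.symm
          · exact absurd h ((HC1.2 h0).1))

      by_cases hwp2 : w = p2
      · subst hwp2
        exact key_pend a2 (by simp [hPdef]) hDadjp2 (fun h => by
          rw [hga2] at h
          by_cases h0 : α2 = 0
          · rw [h0] at h; exact h.symm
          · exact absurd h ((HC2.1 h0).1))

      by_cases hwq2 : w = q2
      · subst hwq2
        exact key_pend b2 (by simp [hPdef]) hDadjq2 (fun h => by
          rw [hgb2] at h
          by_cases h0 : β2 = 0
          · rw [h0] at h; exact h.symm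
          · exact absurd h ((HC2.2 h0).1))

      by_cases hwp3 : w = p3
      · subst hwp3
        exact key_pend a3 (by simp [hPdef]) hDadjp3 (fun h => by
          rw [hga3] at h
          by_cases h0 : α3 = 0
          · rw [h0] at h; exact h.symm
          · exact absurd h ((HC3.1 h0).1))

      by_cases hwq3 : w = q3
      · subst hwq3
        exact key_pend b3 (by simp [hPdef]) hDadjq3 (fun h => by
          rw [hgb3] at h
          by_cases h0 : β3 = 0
          · rw [h0] at h; exact h.symm
          · exact absurd h ((HC3.2 h0).1))

      by_cases hwx : w = x
      · subst hwx
        have hsub : {u | G.Adj w u ∧ g u = f w} ⊆ {u | G.Adj w u ∧ u ∉ D ∧ f u = f w} := by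
          rintro u ⟨hadj, hcol⟩
          by_cases huD : u ∈ D
          · exfalso
            have := hDadjx u hadj huD; subst this
            rw [hgaa] at hcol
            rcases Hα with ⟨h0, hx0, hy0⟩ | ⟨hn0, hnx, hny⟩
            · rw [h0] at hcol; exact hx0 hcol.symm
            · exact hnx hcol
          · exact ⟨hadj, huD, by rw [← hgout u huD]; exact hcol⟩
        exact le_trans (Set.ncard_le_ncard hsub (Set.toFinite _)) (hOk w hwD)

      by_cases hwy : w = y
      · subst hwy
        have hsub : {u | G.Adj w u ∧ g u = f w} ⊆ {u | G.Adj w u ∧ u ∉ D ∧ f u = f w} := by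
          rintro u ⟨hadj, hcol⟩
          by_cases huD : u ∈ D
          · exfalso
            have := hDadjy u hadj huD; subst this
            rw [hgaa] at hcol
            rcases Hα with ⟨h0, hx0, hy0⟩ | ⟨hn0, hnx, hny⟩
            · rw [h0] at hcol; exact hy0 hcol.symm
            · exact hny hcol
          · exact ⟨hadj, huD, by rw [← hgout u huD]; exact hcol⟩
        exact le_trans (Set.ncard_le_ncard hsub (Set.toFinite _)) (hOk w hwD)

      by_cases hwx' : w = x'
      · subst hwx'
        have hsub : {u | G.Adj w u ∧ g u = f w} ⊆ {u | G.Adj w u ∧ u ∉ D ∧ f u = f w} := by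
          rintro u ⟨hadj, hcol⟩
          by_cases huD : u ∈ D
          · exfalso
            have := hDadjx' u hadj huD; subst this
            rw [hgbb] at hcol
            rcases Hβ with ⟨h0, hx0, hy0⟩ | ⟨hn0, hnx, hny⟩
            · rw [h0] at hcol; exact hx0 hcol.symm
            · exact hnx hcol
          · exact ⟨hadj, huD, by rw [← hgout u huD]; exact hcol⟩
        exact le_trans (Set.ncard_le_ncard hsub (Set.toFinite _)) (hOk w hwD)

      by_cases hwy' : w = y'
      · subst hwy'
        have hsub : {u | G.Adj w u ∧ g u = f w} ⊆ {u | G.Adj w u ∧ u ∉ D ∧ f u = f w} := by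
          rintro u ⟨hadj, hcol⟩
          by_cases huD : u ∈ D
          · exfalso
            have := hDadjy' u hadj huD; subst this
            rw [hgbb] at hcol
            rcases Hβ with ⟨h0, hx0, hy0⟩ | ⟨hn0, hnx, hny⟩
            · rw [h0] at hcol; exact hy0 hcol.symm
            · exact hny hcol
          · exact ⟨hadj, huD, by rw [← hgout u huD]; exact hcol⟩
        exact le_trans (Set.ncard_le_ncard hsub (Set.toFinite _)) (hOk w hwD)

      have hsub : {u | G.Adj w u ∧ g u = f w} ⊆ {u | G.Adj w u ∧ u ∉ D ∧ f u = f w} := by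
        rintro u ⟨hadj, hcol⟩
        by_cases huD : u ∈ D
        · exfalso
          rcases (hmemD u).1 huD with rfl | rfl | rfl | rfl | rfl | rfl | rfl | rfl | rfl
          · rcases (hNv w).1 hadj.symm with rfl | rfl | rfl | rfl | rfl | rfl | rfl | rfl
            · exact hwa1 rfl
            · exact hwb1 rfl
            · exact hwa2 rfl
            · exact hwb2 rfl
            · exact hwa3 rfl
            · exact hwb3 rfl
            · exact hwaa rfl
            · exact hwbb rfl
          · rcases (hNa1 w).1 hadj.symm with rfl | rfl | rfl
            · exact hwv rfl
            · exact hwb1 rfl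
            · exact hwp1 rfl
          · rcases (hNb1 w).1 hadj.symm with rfl | rfl | rfl
            · exact hwv rfl
            · exact hwa1 rfl
            · exact hwq1 rfl
          · rcases (hNa2 w).1 hadj.symm with rfl | rfl | rfl
            · exact hwv rfl
            · exact hwb2 rfl
            · exact hwp2 rfl
          · rcases (hNb2 w).1 hadj.symm with rfl | rfl | rfl
            · exact hwv rfl
            · exact hwa2 rfl
            · exact hwq2 rfl
          · rcases (hNa3 w).1 hadj.symm with rfl | rfl | rfl
            · exact hwv rfl
            · exact hwb3 rfl
            · exact hwp3 rfl
          · rcases (hNb3 w).1 hadj.symm with rfl | rfl | rfl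
            · exact hwv rfl
            · exact hwa3 rfl
            · exact hwq3 rfl
          · rcases (hNaa w).1 hadj.symm with rfl | rfl | rfl
            · exact hwv rfl
            · exact hwx rfl
            · exact hwy rfl
          · rcases (hNbb w).1 hadj.symm with rfl | rfl | rfl
            · exact hwv rfl
            · exact hwx' rfl
            · exact hwy' rfl
        · exact ⟨hadj, huD, by rw [← hgout u huD]; exact hcol⟩
      exact le_trans (Set.ncard_le_ncard hsub (Set.toFinite _)) (hOk w hwD)

    have hother : ∀ d : Fin 3, d ≠ 0 →
        (if d = 1 then (2 : Fin 3) else 1) ≠ 0 ∧ (if d = 1 then (2 : Fin 3) else 1) ≠ d := by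
      decide
    have hempty2 : ∀ s t : Fin 3, (¬ ∃ dd : Fin 3, dd ≠ 0 ∧ dd ≠ s ∧ dd ≠ t) →
        s ≠ 0 ∧ t ≠ 0 := by decide
    have pairpick : ∀ p q : Fin 3, ∃ A B : Fin 3, A ≠ 0 ∧
        (A ≠ 0 → A ≠ p ∧ A ≠ B) ∧ (B ≠ 0 → B ≠ q ∧ B ≠ A) := by decide
    have htriv : ∀ c d : Fin 3, ((0 : Fin 3) ≠ 0 → (0:Fin 3) ≠ c ∧ (0:Fin 3) ≠ (0:Fin 3)) ∧
        ((0 : Fin 3) ≠ 0 → (0:Fin 3) ≠ d ∧ (0:Fin 3) ≠ (0:Fin 3)) :=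
      fun c d => ⟨fun h => absurd rfl h, fun h => absurd rfl h⟩
    by_cases hA : ∃ dd : Fin 3, dd ≠ 0 ∧ dd ≠ f x ∧ dd ≠ f y
    · by_cases hB : ∃ dd : Fin 3, dd ≠ 0 ∧ dd ≠ f x' ∧ dd ≠ f y'
      · -- strategy: v gets 0, pairs get nonzero colors
        obtain ⟨da, hda0, hdax, hday⟩ := hA
        obtain ⟨db, hdb0, hdbx, hdby⟩ := hB
        obtain ⟨A1, B1, hA1n, hA1c, hB1c⟩ := pairpick (f p1) (f q1)
        obtain ⟨A2, B2, hA2n, hA2c, hB2c⟩ := pairpick (f p2) (f q2)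
        obtain ⟨A3, B3, hA3n, hA3c, hB3c⟩ := pairpick (f p3) (f q3)
        exact master2 0 da db A1 B1 A2 B2 A3 B3
          (fun h => absurd rfl h)
          (fun _ => ⟨hda0, hdb0, hA1n, hA2n, hA3n⟩)
          (Or.inr ⟨hda0, hdax, hday⟩)
          (Or.inr ⟨hdb0, hdbx, hdby⟩)
          ⟨hA1c, hB1c⟩ ⟨hA2c, hB2c⟩ ⟨hA3c, hB3c⟩
      · obtain ⟨da, hda0, hdax, hday⟩ := hA
        obtain ⟨hx'0, hy'0⟩ := hempty2 (f x') (f y') hB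
        obtain ⟨hg0, hgd⟩ := hother da hda0
        exact master2 (if da = 1 then (2 : Fin 3) else 1) da 0 0 0 0 0 0 0
          (fun _ => ⟨Ne.symm hgd, Ne.symm hg0, Ne.symm hg0, Ne.symm hg0, Ne.symm hg0,
            Ne.symm hg0, Ne.symm hg0, Ne.symm hg0⟩)
          (fun h => absurd h hg0)
          (Or.inr ⟨hda0, hdax, hday⟩)
          (Or.inl ⟨rfl, hx'0, hy'0⟩)
          (htriv (f p1) (f q1)) (htriv (f p2) (f q2)) (htriv (f p3) (f q3))
    · by_cases hB : ∃ dd : Fin 3, dd ≠ 0 ∧ dd ≠ f x' ∧ dd ≠ f y'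
      · obtain ⟨db, hdb0, hdbx, hdby⟩ := hB
        obtain ⟨hx0, hy0⟩ := hempty2 (f x) (f y) hA
        obtain ⟨hg0, hgd⟩ := hother db hdb0
        exact master2 (if db = 1 then (2 : Fin 3) else 1) 0 db 0 0 0 0 0 0
          (fun _ => ⟨Ne.symm hg0, Ne.symm hgd, Ne.symm hg0, Ne.symm hg0, Ne.symm hg0,
            Ne.symm hg0, Ne.symm hg0, Ne.symm hg0⟩)
          (fun h => absurd h hg0)
          (Or.inl ⟨rfl, hx0, hy0⟩)
          (Or.inr ⟨hdb0, hdbx, hdby⟩)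
          (htriv (f p1) (f q1)) (htriv (f p2) (f q2)) (htriv (f p3) (f q3))
      · obtain ⟨hx0, hy0⟩ := hempty2 (f x) (f y) hA
        obtain ⟨hx'0, hy'0⟩ := hempty2 (f x') (f y') hB
        exact master2 1 0 0 0 0 0 0 0 0
          (fun _ => ⟨by decide, by decide, by decide, by decide, by decide, by decide,
            by decide, by decide⟩)
          (fun h => absurd h (by decide))
          (Or.inl ⟨rfl, hx0, hy0⟩)
          (Or.inl ⟨rfl, hx'0, hy'0⟩)
          (htriv (f p1) (f q1)) (htriv (f p2) (f q2)) (htriv (f p3) (f q3))
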